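/- arXiv:1901.07712 — 9 statements merged into one kernel-verified Lean document; each statement's English description precedes it below -/
import Mathlib

section
/- Let (Ω,σ) be a topological dynamical system (Ω compact metric, σ continuous) and f ∈ C⁰(Ω). Let f̄ = min over σ-invariant Borel probability measures μ of ∫f dμ. Define u(ω) = - inf_{n≥1} Σ_{k=0}^{n-1} (f - f̄)(σ^k(ω)), and assume u(ω) < +∞ for all ω. Then u⁺ = max(u,0) is lower semi-continuous and satisfies f(ω) - f̄ ≥ u⁺(σ(ω)) - u⁺(ω) for all ω ∈ Ω. -/
open MeasureTheory Filter Topology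

noncomputable section

variable {Ω : Type*}

/-- `μ` is a `σ`-invariant Borel probability measure. -/
def IsInvProb [MeasurableSpace Ω] (σ : Ω → Ω) (μ : Measure Ω) : Prop :=
  IsProbabilityMeasure μ ∧ Measure.map σ μ = μ

/-- Birkhoff sum `∑_{k=0}^{n-1} g(σ^k ω)`. -/
def birk (σ : Ω → Ω) (g : Ω → ℝ) (n : ℕ) (ω : Ω) : ℝ :=
  ∑ k ∈ Finset.range n, g (σ^[k] ω)

/-- The transfer function `u(ω) = - inf_{n ≥ 1} ∑_{k=0}^{n-1} (f - f̄)(σ^k ω)`. -/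
def uFn (σ : Ω → Ω) (f : Ω → ℝ) (fbar : ℝ) (ω : Ω) : ℝ :=
  -(⨅ n : ℕ, birk σ (fun x => f x - fbar) (n + 1) ω)

/-- The support of a measure: points all of whose open neighborhoods have positive measure. -/
def msupport [TopologicalSpace Ω] [MeasurableSpace Ω] (μ : Measure Ω) : Set Ω :=
  {ω | ∀ U : Set Ω, IsOpen U → ω ∈ U → 0 < μ U}

/-- `μ` is a minimizing measure for `f` with ergodic minimizing value `fbar`. -/
def IsMinimizing [MeasurableSpace Ω] (σ : Ω → Ω) (f : Ω → ℝ) (fbar : ℝ)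
    (μ : Measure Ω) : Prop :=
  IsInvProb σ μ ∧ ∫ x, f x ∂μ = fbar

/-- The Mather set: union of supports of minimizing measures. -/
def MatherSet [TopologicalSpace Ω] [MeasurableSpace Ω] (σ : Ω → Ω) (f : Ω → ℝ)
    (fbar : ℝ) : Set Ω :=
  {ω | ∃ μ : Measure Ω, IsMinimizing σ f fbar μ ∧ ω ∈ msupport μ}

/-- `fbar` is the minimum of `∫ f dμ` over invariant probability measures. -/
def IsErgMinValue [MeasurableSpace Ω] (σ : Ω → Ω) (f : Ω → ℝ) (fbar : ℝ) : Prop :=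
  IsLeast {x : ℝ | ∃ μ : Measure Ω, IsInvProb σ μ ∧ ∫ w, f w ∂μ = x} fbar

/-- lower semicontinuity of `u⁺` and the sub-cohomological inequality. -/
theorem stmt0 [MetricSpace Ω] [CompactSpace Ω] [MeasurableSpace Ω] [BorelSpace Ω]
    (σ : Ω → Ω) (hσ : Continuous σ) (f : Ω → ℝ) (hf : Continuous f) (fbar : ℝ)
    (hfbar : IsErgMinValue σ f fbar)
    (hfin : ∀ ω : Ω, BddBelow (Set.range fun n : ℕ => birk σ (fun x => f x - fbar) (n + 1) ω)) :
    LowerSemicontinuous (fun ω => max (uFn σ f fbar ω) 0) ∧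
    ∀ ω : Ω, f ω - fbar ≥ max (uFn σ f fbar (σ ω)) 0 - max (uFn σ f fbar ω) 0 := by

  set g : Ω → ℝ := fun x => f x - fbar with hg
  have hgc : Continuous g := hf.sub continuous_const
  have hbc : ∀ n : ℕ, Continuous (fun ω => birk σ g n ω) := by
    intro n
    unfold birk
    exact continuous_finset_sum _ fun k _ => hgc.comp (hσ.iterate k)
  have hle : ∀ (ω : Ω) (n : ℕ), -(birk σ g (n + 1) ω) ≤ uFn σ f fbar ω := by
    intro ω n
    exact neg_le_neg (ciInf_le (hfin ω) n)
  have hb1 : ∀ ω : Ω, birk σ g 1 ω = g ω := by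
    intro ω; simp [birk]
  have huEq : ∀ ω : Ω, uFn σ f fbar ω = -(⨅ n : ℕ, birk σ g (n + 1) ω) := fun _ => rfl
  constructor
  · intro ω y hy
    rcases lt_or_ge y 0 with h0 | h0
    · exact Filter.Eventually.of_forall fun x => lt_of_lt_of_le h0 (le_max_right _ _)
    · have hupos : 0 < uFn σ f fbar ω := by
        rcases lt_max_iff.mp (lt_of_le_of_lt h0 hy) with h | h
        · exact h
        · exact absurd h (lt_irrefl 0)
      have hy' : y < uFn σ f fbar ω := by
        have : max (uFn σ f fbar ω) 0 = uFn σ f fbar ω := max_eq_left hupos.le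
        simpa [this] using hy
      have hinf : (⨅ n : ℕ, birk σ g (n + 1) ω) < -y := by
        have := huEq ω
        linarith
      obtain ⟨n, hn⟩ := exists_lt_of_ciInf_lt hinf
      have hmem : ω ∈ {x | birk σ g (n + 1) x < -y} := hn
      have hop : IsOpen {x | birk σ g (n + 1) x < -y} :=
        isOpen_lt (hbc (n + 1)) continuous_const
      filter_upwards [hop.mem_nhds hmem] with x hx
      have := hle x n
      have hx' : birk σ g (n + 1) x < -y := hx
      calc y < -(birk σ g (n + 1) x) := by linarith
        _ ≤ uFn σ f fbar x := this
        _ ≤ max (uFn σ f fbar x) 0 := le_max_left _ _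
  · intro ω
    have hbsplit : ∀ n : ℕ, birk σ g (n + 2) ω = g ω + birk σ g (n + 1) (σ ω) := by
      intro n
      unfold birk
      rw [Finset.sum_range_succ']
      simp [Function.iterate_succ_apply, add_comm]
    have h1 : uFn σ f fbar (σ ω) ≤ g ω + max (uFn σ f fbar ω) 0 := by
      have hlb : ∀ n : ℕ, -(g ω + max (uFn σ f fbar ω) 0) ≤ birk σ g (n + 1) (σ ω) := by
        intro n
        have h2 := hle ω (n + 1)
        have h3 := hbsplit n
        have h4 : uFn σ f fbar ω ≤ max (uFn σ f fbar ω) 0 := le_max_left _ _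
        linarith
      have h5 := le_ciInf hlb
      have h6 := huEq (σ ω)
      linarith
    have h2 : 0 ≤ g ω + max (uFn σ f fbar ω) 0 := by
      have := hle ω 0
      rw [hb1 ω] at this
      have h4 : uFn σ f fbar ω ≤ max (uFn σ f fbar ω) 0 := le_max_left _ _
      linarith
    have h3 : max (uFn σ f fbar (σ ω)) 0 ≤ g ω + max (uFn σ f fbar ω) 0 := max_le h1 h2
    have : g ω = f ω - fbar := rfl
    linarith
end
end

section
/- Let (Ω,σ) be a topological dynamical system, f continuous, f̄ its ergodic minimizing value, and suppose u(ω) := - inf_{n≥1} Σ_{k=0}^{n-1}(f - f̄)(σ^k(ω)) is finite for every ω. Then for every ω ∈ Ω the identity f(ω) - f̄ = u⁺(σ(ω)) - u(ω) holds, where u⁺ = max(u,0). -/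
open MeasureTheory Filter Topology

noncomputable section

variable {Ω : Type*}

/-! Splitting off the first term of every Birkhoff sum of `g = f - f̄` gives
`inf_{n ≥ 1} S_n g (ω) = g ω + min 0 (inf_{n ≥ 1} S_n g (σ ω))`: the infimum is attained
either at `n = 1` or among the sums of length `n ≥ 2`, which are `g ω` plus a sum starting at
`σ ω`.
Negating this is the identity. -/

theorem inf_ciInf_nat_succ {α : Type*} [ConditionallyCompleteLattice α] {u : ℕ → α}
    (hu : BddBelow (Set.range u)) : u 0 ⊓ ⨅ n, u (n + 1) = ⨅ n, u n := by
  have hu' : BddBelow (Set.range fun n => u (n + 1)) :=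
    hu.mono <| Set.range_subset_iff.2 fun n => Set.mem_range_self (n + 1)
  refine le_antisymm (le_ciInf fun n => ?_)
    (le_inf (ciInf_le hu 0) (le_ciInf fun n => ciInf_le hu _))
  cases n with
  | zero => exact inf_le_left
  | succ n => exact inf_le_right.trans (ciInf_le hu' n)

theorem birk_succ (σ : Ω → Ω) (g : Ω → ℝ) (n : ℕ) (ω : Ω) :
    birk σ g (n + 1) ω = g ω + birk σ g n (σ ω) := by
  simp only [birk, Finset.sum_range_succ', Function.iterate_succ_apply,
    Function.iterate_zero_apply, add_comm]

theorem iInf_birk_succ_eq_add_min {σ : Ω → Ω} {g : Ω → ℝ} {ω : Ω}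
    (hω : BddBelow (Set.range fun n => birk σ g (n + 1) ω))
    (hσω : BddBelow (Set.range fun n => birk σ g (n + 1) (σ ω))) :
    ⨅ n, birk σ g (n + 1) ω = g ω + min 0 (⨅ n, birk σ g (n + 1) (σ ω)) := by
  have hshift : g ω + ⨅ n, birk σ g (n + 1) (σ ω) = ⨅ n, g ω + birk σ g (n + 1) (σ ω) :=
    (OrderIso.addLeft (g ω)).map_ciInf hσω
  rw [← inf_ciInf_nat_succ hω, add_min, add_zero, hshift]
  congr 1
  · simp [birk]
  · exact iInf_congr fun n => birk_succ σ g (n + 1) ω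

theorem uFn_eq_max_uFn_sub {σ : Ω → Ω} {f : Ω → ℝ} {fbar : ℝ} {ω : Ω}
    (hω : BddBelow (Set.range fun n => birk σ (fun x => f x - fbar) (n + 1) ω))
    (hσω : BddBelow (Set.range fun n => birk σ (fun x => f x - fbar) (n + 1) (σ ω))) :
    uFn σ f fbar ω = max (uFn σ f fbar (σ ω)) 0 - (f ω - fbar) := by
  rw [uFn, uFn, iInf_birk_succ_eq_add_min hω hσω, neg_add, ← max_neg_neg, neg_zero,
    max_comm]
  ring

theorem stmt1_general (σ : Ω → Ω) (f : Ω → ℝ) (fbar : ℝ)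
    (hfin : ∀ ω : Ω, BddBelow (Set.range fun n : ℕ => birk σ (fun x => f x - fbar) (n + 1) ω)) :
    ∀ ω : Ω, f ω - fbar = max (uFn σ f fbar (σ ω)) 0 - uFn σ f fbar ω := by
  intro ω
  rw [uFn_eq_max_uFn_sub (hfin ω) (hfin (σ ω))]
  ring

/-- the identity `f - f̄ = u⁺∘σ - u`. -/
theorem stmt1 [MetricSpace Ω] [CompactSpace Ω] [MeasurableSpace Ω] [BorelSpace Ω]
    (σ : Ω → Ω) (hσ : Continuous σ) (f : Ω → ℝ) (hf : Continuous f) (fbar : ℝ)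
    (hfbar : IsErgMinValue σ f fbar)
    (hfin : ∀ ω : Ω, BddBelow (Set.range fun n : ℕ => birk σ (fun x => f x - fbar) (n + 1) ω)) :
    ∀ ω : Ω, f ω - fbar = max (uFn σ f fbar (σ ω)) 0 - uFn σ f fbar ω :=
  stmt1_general σ f fbar hfin
end
end

section
/- Let (Ω,σ) be a topological dynamical system, f continuous with ergodic minimizing value f̄, and assume u(ω) := - inf_{n≥1} Σ_{k=0}^{n-1}(f - f̄)(σ^k(ω)) < ∞ for all ω. Then for every minimizing measure μ (i.e., μ invariant with ∫f dμ = f̄), one has u ≥ 0 μ-almost everywhere. -/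
/-!
The infimum of Birkhoff sums satisfies the dynamic-programming identity
`u⁺ ∘ σ = u + (f - f̄)`, hence `u⁺ ∘ σ - u⁺ = (f - f̄) - u⁻`. The coboundary on the left
integrates to zero against every invariant measure (after truncating `u⁺`, which need not be
integrable), and `∫ (f - f̄) dμ = 0` when `μ` is minimizing, so `∫ u⁻ dμ = 0`, i.e. `u⁻ = 0` a.e.
-/

open MeasureTheory Filter Topology

noncomputable section

variable {Ω : Type*}

namespace MeasureTheory.MeasurePreserving

variable [MeasurableSpace Ω] {μ : Measure Ω} [IsFiniteMeasure μ] {T : Ω → Ω}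

/-- `v` itself need not be integrable: truncate it to `[-M, M]` and let `M → ∞` by dominated
convergence, the truncation being `1`-Lipschitz. -/
theorem integral_comp_sub_self_eq_zero (hT : MeasurePreserving T μ μ) {v : Ω → ℝ}
    (hv : Measurable v) (hint : Integrable (fun x => v (T x) - v x) μ) :
    ∫ x, (v (T x) - v x) ∂μ = 0 := by
  set trunc : ℕ → ℝ → ℝ := fun M y => Set.projIcc (-(M : ℝ)) M (by simp) y
  have trunc_meas : ∀ M, Measurable (fun x => trunc M (v x)) := fun M =>
    (continuous_subtype_val.comp continuous_projIcc).measurable.comp hv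
  have trunc_int : ∀ M, Integrable (fun x => trunc M (v x)) μ := fun M =>
    (integrable_const (M : ℝ)).mono' (trunc_meas M).aestronglyMeasurable
      (ae_of_all _ fun x => abs_le.2 (Set.projIcc (-(M : ℝ)) M (by simp) (v x)).2)
  have trunc_zero : ∀ M, ∫ x, (trunc M (v (T x)) - trunc M (v x)) ∂μ = 0 := fun M => by
    have int_comp : Integrable (fun x => trunc M (v (T x))) μ :=
      hT.integrable_comp_of_integrable (trunc_int M)
    rw [integral_sub int_comp (trunc_int M), sub_eq_zero,
      ← integral_map hT.aemeasurable (trunc_meas M).aestronglyMeasurable, hT.map_eq]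
  have lim : Tendsto (fun M => ∫ x, (trunc M (v (T x)) - trunc M (v x)) ∂μ) atTop
      (𝓝 (∫ x, (v (T x) - v x) ∂μ)) := by
    refine tendsto_integral_of_dominated_convergence (fun x => |v (T x) - v x|)
      (fun M => (((trunc_meas M).comp hT.measurable).sub (trunc_meas M)).aestronglyMeasurable)
      hint.abs (fun M => ae_of_all _ fun x => Set.abs_projIcc_sub_projIcc _)
      (ae_of_all _ fun x => tendsto_const_nhds.congr' ?_)
    filter_upwards [eventually_ge_atTop ⌈max |v x| |v (T x)|⌉₊] with M hM
    have hM' : max |v x| |v (T x)| ≤ M := Nat.ceil_le.1 hM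
    simp only [trunc]
    rw [Set.projIcc_of_mem _ (abs_le.1 ((le_max_right _ _).trans hM')),
      Set.projIcc_of_mem _ (abs_le.1 ((le_max_left _ _).trans hM'))]
  exact tendsto_nhds_unique lim (tendsto_const_nhds.congr fun M => (trunc_zero M).symm)

end MeasureTheory.MeasurePreserving

theorem iInf_birk_succ {σ : Ω → Ω} {g : Ω → ℝ}
    (hbdd : ∀ ω, BddBelow (Set.range fun n : ℕ => birk σ g (n + 1) ω)) (ω : Ω) :
    ⨅ n : ℕ, birk σ g (n + 1) ω = g ω + min 0 (⨅ n : ℕ, birk σ g (n + 1) (σ ω)) := by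
  apply le_antisymm
  · rw [← min_add_add_left, add_zero]
    refine le_min ?_ ?_
    · simpa [birk] using ciInf_le (hbdd ω) 0
    · rw [← sub_le_iff_le_add']
      refine le_ciInf fun n => ?_
      rw [sub_le_iff_le_add', ← birk_succ]
      exact ciInf_le (hbdd ω) (n + 1)
  · refine le_ciInf fun n => ?_
    rw [birk_succ]
    gcongr
    cases n with
    | zero => simp [birk]
    | succ n => exact min_le_of_right_le (ciInf_le (hbdd (σ ω)) n)

section Transfer

variable {σ : Ω → Ω} {f : Ω → ℝ} {fbar : ℝ}

theorem posPart_uFn_comp_eq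
    (hbdd : ∀ ω, BddBelow (Set.range fun n : ℕ => birk σ (fun x => f x - fbar) (n + 1) ω))
    (ω : Ω) : (uFn σ f fbar (σ ω))⁺ = uFn σ f fbar ω + (f ω - fbar) := by
  rw [uFn, uFn, iInf_birk_succ hbdd ω, neg_add, posPart_def, ← max_neg_neg, neg_zero, max_comm]
  ring

theorem neg_uFn_le
    (hbdd : ∀ ω, BddBelow (Set.range fun n : ℕ => birk σ (fun x => f x - fbar) (n + 1) ω))
    (ω : Ω) : -uFn σ f fbar ω ≤ f ω - fbar := by
  simpa [uFn, birk] using ciInf_le (hbdd ω) 0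

theorem measurable_uFn [TopologicalSpace Ω] [MeasurableSpace Ω] [OpensMeasurableSpace Ω]
    (hσ : Continuous σ) (hf : Continuous f) : Measurable (uFn σ f fbar) :=
  (Measurable.iInf fun _ => (continuous_finsetSum _ fun k _ =>
    (hf.sub continuous_const).comp (hσ.iterate k)).measurable).neg

theorem integrable_negPart_uFn [MeasurableSpace Ω] {μ : Measure Ω}
    (hu : Measurable (uFn σ f fbar)) (hg : Integrable (fun x => f x - fbar) μ)
    (hbdd : ∀ ω, BddBelow (Set.range fun n : ℕ => birk σ (fun x => f x - fbar) (n + 1) ω)) :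
    Integrable (fun x => (uFn σ f fbar x)⁻) μ := by
  refine hg.abs.mono' hu.negPart.aestronglyMeasurable (ae_of_all _ fun x => ?_)
  rw [Real.norm_of_nonneg (negPart_nonneg _)]
  exact max_le ((neg_uFn_le hbdd x).trans (le_abs_self _)) (abs_nonneg _)

theorem integral_negPart_uFn_eq [MeasurableSpace Ω] {μ : Measure Ω} [IsFiniteMeasure μ]
    (hσ : MeasurePreserving σ μ μ) (hu : Measurable (uFn σ f fbar))
    (hg : Integrable (fun x => f x - fbar) μ)
    (hbdd : ∀ ω, BddBelow (Set.range fun n : ℕ => birk σ (fun x => f x - fbar) (n + 1) ω)) :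
    ∫ x, (uFn σ f fbar x)⁻ ∂μ = ∫ x, (f x - fbar) ∂μ := by
  set u := uFn σ f fbar
  have coboundary : ∀ x, (u (σ x))⁺ - (u x)⁺ = (f x - fbar) - (u x)⁻ := fun x => by
    linarith [posPart_uFn_comp_eq hbdd x, posPart_sub_negPart (u x)]
  have hneg := integrable_negPart_uFn hu hg hbdd
  have hcob : ∫ x, ((u (σ x))⁺ - (u x)⁺) ∂μ = 0 :=
    hσ.integral_comp_sub_self_eq_zero hu.posPart
      ((hg.sub hneg).congr (ae_of_all _ fun x => (coboundary x).symm))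
  rw [integral_congr_ae (ae_of_all _ coboundary), integral_sub hg hneg] at hcob
  linarith

end Transfer

theorem stmt2_general [MetricSpace Ω] [CompactSpace Ω] [MeasurableSpace Ω] [BorelSpace Ω]
    (σ : Ω → Ω) (hσ : Continuous σ) (f : Ω → ℝ) (hf : Continuous f) (fbar : ℝ)
    (hfin : ∀ ω : Ω, BddBelow (Set.range fun n : ℕ => birk σ (fun x => f x - fbar) (n + 1) ω))
    (μ : Measure Ω) (hμ : IsMinimizing σ f fbar μ) :
    ∀ᵐ ω ∂μ, 0 ≤ uFn σ f fbar ω := by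
  obtain ⟨⟨hprob, hinv⟩, hint⟩ := hμ
  have hg : Integrable (fun x => f x - fbar) μ :=
    (hf.sub continuous_const).integrable_of_hasCompactSupport (.of_compactSpace _)
  have hg_zero : ∫ x, (f x - fbar) ∂μ = 0 := by
    rw [integral_sub (hf.integrable_of_hasCompactSupport (.of_compactSpace _))
      (integrable_const fbar), hint, integral_const, probReal_univ, one_smul, sub_self]
  have hu := measurable_uFn (fbar := fbar) hσ hf
  have hneg_zero : ∫ x, (uFn σ f fbar x)⁻ ∂μ = 0 := by
    rw [integral_negPart_uFn_eq ⟨hσ.measurable, hinv⟩ hu hg hfin, hg_zero]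
  filter_upwards [(integral_eq_zero_iff_of_nonneg (fun x => negPart_nonneg _)
    (integrable_negPart_uFn hu hg hfin)).1 hneg_zero] with x hx
  exact negPart_eq_zero.1 hx

/-- `u ≥ 0` almost everywhere for every minimizing measure. -/
theorem stmt2 [MetricSpace Ω] [CompactSpace Ω] [MeasurableSpace Ω] [BorelSpace Ω]
    (σ : Ω → Ω) (hσ : Continuous σ) (f : Ω → ℝ) (hf : Continuous f) (fbar : ℝ)
    (hfbar : IsErgMinValue σ f fbar)
    (hfin : ∀ ω : Ω, BddBelow (Set.range fun n : ℕ => birk σ (fun x => f x - fbar) (n + 1) ω))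
    (μ : Measure Ω) (hμ : IsMinimizing σ f fbar μ) :
    ∀ᵐ ω ∂μ, 0 ≤ uFn σ f fbar ω :=
  stmt2_general σ hσ f hf fbar hfin μ hμ
end
end

section
/- Let (Ω,σ) be a topological dynamical system, f continuous with ergodic minimizing value f̄, and assume u(ω) := - inf_{n≥1} Σ_{k=0}^{n-1}(f - f̄)(σ^k(ω)) < ∞ for all ω. Define the Mather set 𝓜(f) as the union of supports of minimizing measures, and let M := { ω ∈ 𝓜(f) : for all k ≥ 0, (f - f̄ - u⁺∘σ + u⁺)(σ^k(ω)) = 0 }. Then μ(M) = 1 for every minimizing measure μ, and M is residual (contains a dense Gδ) in 𝓜(f). -/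
open MeasureTheory Filter Topology

noncomputable section

variable {Ω : Type*}

/-- The set `M` of orbits in the Mather set on which the cohomological equation holds. -/
def SolSet [TopologicalSpace Ω] [MeasurableSpace Ω] (σ : Ω → Ω) (f : Ω → ℝ) (fbar : ℝ) :
    Set Ω :=
  {ω ∈ MatherSet σ f fbar | ∀ k : ℕ,
    f (σ^[k] ω) - fbar - max (uFn σ f fbar (σ^[k + 1] ω)) 0
      + max (uFn σ f fbar (σ^[k] ω)) 0 = 0}

/-!
Write `g = f - f̄`. Since `u = sup_{n ≥ 1} (-S_n g)` with `S_{n+1} g = g + S_n g ∘ σ`, we get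
`u ≥ -g + u⁺ ∘ σ`, so the defect `g - u⁺ ∘ σ + u⁺` is nonnegative. For a minimizing measure
`μ` we have `∫ g dμ = 0`, and the coboundary `u⁺ - u⁺ ∘ σ`, although `u⁺` need not be
integrable, is bounded below, so truncating `u⁺` and applying Fatou's lemma shows that the
defect has integral `≤ 0`. Hence it vanishes `μ`-a.e., by invariance along `μ`-a.e. orbit,
and `μ`, being carried by its support, gives `M` full measure.

As `u⁺` is lower semicontinuous, the zero set `{u⁺ ≤ u⁺ ∘ σ - g}` of the defect is a `Gδ`, so
`M` is the trace on the Mather set of a `Gδ` set that has full measure for every minimizing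
measure; such a set meets every open set charged by one of them, so it is dense in the Mather set.
-/

lemma min_sub_zero_le_clamp_sub_clamp (a b M : ℝ) :
    min (a - b) 0 ≤ max (min a M) (-M) - max (min b M) (-M) := by
  simp only [max_def, min_def]
  split_ifs <;> linarith

lemma clamp_eq_self {a M : ℝ} (ha : |a| ≤ M) : max (min a M) (-M) = a := by
  rw [abs_le] at ha
  rw [min_eq_left ha.2, max_eq_left ha.1]

theorem MeasureTheory.ae_eq_zero_of_tendsto_of_integral_eq_zero {α : Type*} [MeasurableSpace α]
    {μ : Measure α} {F : ℕ → α → ℝ} {h G : α → ℝ} (hF : ∀ M, Integrable (F M) μ)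
    (hF0 : ∀ M, ∫ x, F M x ∂μ = 0) (hG : Integrable G μ) (hG0 : ∀ x, 0 ≤ G x)
    (hFG : ∀ M x, 0 ≤ F M x + G x) (hh : ∀ x, 0 ≤ h x)
    (hlim : ∀ x, Tendsto (fun M => F M x) atTop (𝓝 (h x))) : h =ᵐ[μ] 0 := by
  have hF_meas (M : ℕ) : AEMeasurable (F M) μ := (hF M).aemeasurable
  have hG_meas : AEMeasurable G μ := hG.aemeasurable
  have h_meas : AEMeasurable h μ :=
    aemeasurable_of_tendsto_metrizable_ae' hF_meas (ae_of_all _ hlim)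
  have hFG_lintegral (M : ℕ) :
      ∫⁻ x, ENNReal.ofReal (F M x + G x) ∂μ = ∫⁻ x, ENNReal.ofReal (G x) ∂μ := by
    have hFG_int : Integrable (fun x => F M x + G x) μ := (hF M).add hG
    rw [← ofReal_integral_eq_lintegral_ofReal hFG_int (ae_of_all _ (hFG M)),
      ← ofReal_integral_eq_lintegral_ofReal hG (ae_of_all _ hG0),
      integral_add (hF M) hG, hF0, zero_add]
  have hfatou : ∫⁻ x, ENNReal.ofReal (h x) ∂μ + ∫⁻ x, ENNReal.ofReal (G x) ∂μ ≤
      ∫⁻ x, ENNReal.ofReal (G x) ∂μ :=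
    calc ∫⁻ x, ENNReal.ofReal (h x) ∂μ + ∫⁻ x, ENNReal.ofReal (G x) ∂μ
        = ∫⁻ x, liminf (fun M => ENNReal.ofReal (F M x + G x)) atTop ∂μ := by
          rw [← lintegral_add_left' (by fun_prop)]
          refine lintegral_congr fun x => ?_
          rw [← ENNReal.ofReal_add (hh x) (hG0 x)]
          exact ((ENNReal.continuous_ofReal.tendsto _).comp
            ((hlim x).add_const (G x))).liminf_eq.symm
      _ ≤ liminf (fun M => ∫⁻ x, ENNReal.ofReal (F M x + G x) ∂μ) atTop :=
          lintegral_liminf_le' fun M => by fun_prop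
      _ = ∫⁻ x, ENNReal.ofReal (G x) ∂μ := by simp only [hFG_lintegral, liminf_const]
  have hzero : ∫⁻ x, ENNReal.ofReal (h x) ∂μ = 0 :=
    nonpos_iff_eq_zero.1 <| ENNReal.le_of_add_le_add_right hG.lintegral_lt_top.ne
      (by rwa [zero_add])
  filter_upwards [(lintegral_eq_zero_iff' (by fun_prop)).1 hzero] with x hx
  exact le_antisymm (ENNReal.ofReal_eq_zero.1 hx) (hh x)

theorem MeasureTheory.MeasurePreserving.integral_sub_comp_add_eq_zero {α : Type*}
    [MeasurableSpace α] {μ : Measure α} {σ : α → α} (hσ : MeasurePreserving σ μ μ)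
    {g ψ : α → ℝ} (hg : Integrable g μ) (hg0 : ∫ x, g x ∂μ = 0) (hψ : Integrable ψ μ) :
    ∫ x, g x - ψ (σ x) + ψ x ∂μ = 0 := by
  have hψσ : Integrable (fun x => ψ (σ x)) μ := hσ.integrable_comp_of_integrable hψ
  have hcomp : ∫ x, ψ (σ x) ∂μ = ∫ x, ψ x ∂μ := by
    have hψ' : AEStronglyMeasurable ψ (μ.map σ) := by rw [hσ.map_eq]; exact hψ.aestronglyMeasurable
    rw [← integral_map hσ.measurable.aemeasurable hψ', hσ.map_eq]
  have hgψσ : Integrable (fun x => g x - ψ (σ x)) μ := hg.sub hψσ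
  rw [integral_add hgψσ hψ, integral_sub hg hψσ, hcomp, hg0]
  ring

theorem MeasureTheory.MeasurePreserving.ae_eq_zero_of_nonneg_sub_comp_add {α : Type*}
    [MeasurableSpace α] {μ : Measure α} [IsFiniteMeasure μ] {σ : α → α}
    (hσ : MeasurePreserving σ μ μ) {g φ : α → ℝ} (hg : Integrable g μ) (hg0 : ∫ x, g x ∂μ = 0)
    (hφ : Measurable φ) (hnonneg : ∀ x, 0 ≤ g x - φ (σ x) + φ x) :
    (fun x => g x - φ (σ x) + φ x) =ᵐ[μ] 0 := by
  -- truncating `φ` at levels `± M` makes it integrable, so that the coboundary has integral zero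
  set T : ℕ → α → ℝ := fun M x => max (min (φ x) M) (-M)
  have hT_int (M : ℕ) : Integrable (T M) μ := by
    refine .of_bound ((hφ.min measurable_const).max measurable_const).aestronglyMeasurable M
      (ae_of_all _ fun x => ?_)
    simp only [T, Real.norm_eq_abs, abs_le]
    exact ⟨le_max_right _ _, max_le (min_le_right _ _) (by simp)⟩
  refine ae_eq_zero_of_tendsto_of_integral_eq_zero
    (F := fun M x => g x - T M (σ x) + T M x) (G := fun x => 2 * |g x|)
    (fun M => (hg.sub (hσ.integrable_comp_of_integrable (hT_int M))).add (hT_int M))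
    (fun M => hσ.integral_sub_comp_add_eq_zero hg hg0 (hT_int M))
    (hg.abs.const_mul 2) (fun x => by positivity) (fun M x => ?_) hnonneg fun x => ?_
  · have := min_sub_zero_le_clamp_sub_clamp (φ x) (φ (σ x)) M
    have := hnonneg x
    cases abs_cases (g x) <;> cases min_cases (φ x - φ (σ x)) 0 <;> linarith
  · refine tendsto_atTop_of_eventually_const (i₀ := ⌈max |φ x| |φ (σ x)|⌉₊) fun M hM => ?_
    have hM' : max |φ x| |φ (σ x)| ≤ M := Nat.ceil_le.1 hM
    simp only [T, clamp_eq_self (le_of_max_le_left hM'), clamp_eq_self (le_of_max_le_right hM')]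

theorem isGδ_setOf_le_of_lowerSemicontinuous {X : Type*} [TopologicalSpace X]
    [PerfectlyNormalSpace X] {a b : X → ℝ} (ha : LowerSemicontinuous a)
    (hb : LowerSemicontinuous b) : IsGδ {x | a x ≤ b x} := by
  have hset : {x | a x ≤ b x} = ⋂ q : ℚ, (a ⁻¹' Set.Iic q ∪ b ⁻¹' Set.Ioi q) := by
    ext x
    simp only [Set.mem_ofPred_eq, Set.mem_iInter, Set.mem_union, Set.mem_preimage, Set.mem_Iic,
      Set.mem_Ioi]
    refine ⟨fun hx q => (le_or_gt (a x) q).imp_right hx.trans_lt', fun hx => ?_⟩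
    by_contra! hba
    obtain ⟨q, hbq, hqa⟩ := exists_rat_btwn hba
    exact (hx q).elim hqa.not_ge hbq.not_gt
  rw [hset]
  exact .iInter fun q => (ha.isClosed_preimage q).isGδ.union (hb.isOpen_preimage q).isGδ

theorem msupport_eq_support [TopologicalSpace Ω] [MeasurableSpace Ω] (μ : Measure Ω) :
    msupport μ = μ.support := by
  rw [Measure.support_eq_forall_isOpen]
  ext x
  exact forall_congr' fun U => forall_comm

theorem dense_preimage_val_of_forall_mem_support [TopologicalSpace Ω] [MeasurableSpace Ω]
    {s t : Set Ω} (h : ∀ x ∈ s, ∃ μ : Measure Ω, x ∈ μ.support ∧ s ∩ t ∈ ae μ) :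
    Dense (Subtype.val ⁻¹' t : Set s) := by
  rw [dense_iff_inter_open]
  rintro U hU ⟨x, hxU⟩
  obtain ⟨V, hV, rfl⟩ := isOpen_induced_iff.1 hU
  obtain ⟨μ, hxμ, hst⟩ := h x x.2
  have hVpos : 0 < μ V := by
    rw [Measure.support_eq_forall_isOpen] at hxμ
    exact hxμ V hxU hV
  obtain ⟨y, hyV, hys, hyt⟩ :=
    nonempty_of_measure_ne_zero ((measure_inter_conull hst).trans_ne hVpos.ne')
  exact ⟨⟨y, hys⟩, hyV, hyt⟩

section TransferFunction

variable {σ : Ω → Ω} {f : Ω → ℝ} {fbar : ℝ}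

def cohomDefect (σ : Ω → Ω) (f : Ω → ℝ) (fbar : ℝ) (ω : Ω) : ℝ :=
  f ω - fbar - max (uFn σ f fbar (σ ω)) 0 + max (uFn σ f fbar ω) 0

theorem max_uFn_comp_sub_le_uFn
    (hbdd : ∀ ω, BddBelow (Set.range fun n : ℕ => birk σ (fun x => f x - fbar) (n + 1) ω))
    (ω : Ω) : max (uFn σ f fbar (σ ω)) 0 - (f ω - fbar) ≤ uFn σ f fbar ω := by
  set g : Ω → ℝ := fun x => f x - fbar
  have hle_g : ⨅ n : ℕ, birk σ g (n + 1) ω ≤ g ω :=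
    (ciInf_le (hbdd ω) 0).trans_eq (birkhoffSum_one σ g ω)
  have hle_succ : ⨅ n : ℕ, birk σ g (n + 1) ω ≤ g ω + ⨅ n : ℕ, birk σ g (n + 1) (σ ω) := by
    rw [← sub_le_iff_le_add']
    refine le_ciInf fun n => sub_le_iff_le_add'.2 ?_
    exact (ciInf_le (hbdd ω) (n + 1)).trans_eq (birkhoffSum_succ' σ g (n + 1) ω)
  simp only [uFn]
  rcases le_total (-⨅ n : ℕ, birk σ g (n + 1) (σ ω)) 0 with h | h
  · rw [max_eq_right h]; linarith
  · rw [max_eq_left h]; linarith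

theorem cohomDefect_nonneg
    (hbdd : ∀ ω, BddBelow (Set.range fun n : ℕ => birk σ (fun x => f x - fbar) (n + 1) ω))
    (ω : Ω) : 0 ≤ cohomDefect σ f fbar ω := by
  have := max_uFn_comp_sub_le_uFn hbdd ω
  have := le_max_left (uFn σ f fbar ω) 0
  simp only [cohomDefect]
  linarith

theorem lowerSemicontinuous_uFn [TopologicalSpace Ω] (hσ : Continuous σ) (hf : Continuous f)
    (hbdd : ∀ ω, BddBelow (Set.range fun n : ℕ => birk σ (fun x => f x - fbar) (n + 1) ω)) :
    LowerSemicontinuous (uFn σ f fbar) := by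
  refine UpperSemicontinuous.neg (upperSemicontinuous_ciInf hbdd fun n => ?_)
  exact (continuous_finsetSum _ fun k _ => (hf.comp (hσ.iterate k)).sub continuous_const
    ).upperSemicontinuous

theorem isGδ_setOf_cohomDefect_eq_zero [TopologicalSpace Ω] [PerfectlyNormalSpace Ω]
    (hσ : Continuous σ) (hf : Continuous f)
    (hbdd : ∀ ω, BddBelow (Set.range fun n : ℕ => birk σ (fun x => f x - fbar) (n + 1) ω)) :
    IsGδ {ω | cohomDefect σ f fbar ω = 0} := by
  have hu : LowerSemicontinuous fun ω => max (uFn σ f fbar ω) 0 :=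
    (lowerSemicontinuous_uFn hσ hf hbdd).sup lowerSemicontinuous_const
  have hset : {ω | cohomDefect σ f fbar ω = 0} =
      {ω | max (uFn σ f fbar ω) 0 ≤ max (uFn σ f fbar (σ ω)) 0 + -(f ω - fbar)} := by
    ext ω
    have := cohomDefect_nonneg hbdd ω
    simp only [Set.mem_ofPred_eq, cohomDefect] at this ⊢
    constructor <;> intro h <;> linarith
  rw [hset]
  exact isGδ_setOf_le_of_lowerSemicontinuous hu
    ((hu.comp hσ).add (hf.sub continuous_const).neg.lowerSemicontinuous)

theorem solSet_eq_inter_iInter_preimage [TopologicalSpace Ω] [MeasurableSpace Ω] :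
    SolSet σ f fbar = MatherSet σ f fbar ∩ ⋂ k, σ^[k] ⁻¹' {ω | cohomDefect σ f fbar ω = 0} := by
  ext ω
  simp [SolSet, cohomDefect, Function.iterate_succ_apply']

theorem ae_forall_cohomDefect_iterate_eq_zero [TopologicalSpace Ω] [CompactSpace Ω]
    [MeasurableSpace Ω] [BorelSpace Ω] (hσ : Continuous σ) (hf : Continuous f)
    (hbdd : ∀ ω, BddBelow (Set.range fun n : ℕ => birk σ (fun x => f x - fbar) (n + 1) ω))
    {μ : Measure Ω} (hμ : IsMinimizing σ f fbar μ) :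
    ∀ᵐ ω ∂μ, ∀ k : ℕ, cohomDefect σ f fbar (σ^[k] ω) = 0 := by
  obtain ⟨⟨hprob, hmap⟩, hintegral⟩ := hμ
  have hσμ : MeasurePreserving σ μ μ := ⟨hσ.measurable, hmap⟩
  have hg : Integrable (fun x => f x - fbar) μ :=
    (hf.sub continuous_const).integrable_of_hasCompactSupport (.of_compactSpace _)
  have hg0 : ∫ x, f x - fbar ∂μ = 0 := by
    rw [integral_sub (hf.integrable_of_hasCompactSupport (.of_compactSpace _))
      (integrable_const fbar), hintegral, integral_const]
    simp
  have hdefect : ∀ᵐ ω ∂μ, cohomDefect σ f fbar ω = 0 :=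
    hσμ.ae_eq_zero_of_nonneg_sub_comp_add hg hg0
      ((lowerSemicontinuous_uFn hσ hf hbdd).measurable.max measurable_const)
      (cohomDefect_nonneg hbdd)
  exact ae_all_iff.2 fun k => (hσμ.iterate k).quasiMeasurePreserving.ae hdefect

end TransferFunction

theorem stmt3_general [MetricSpace Ω] [CompactSpace Ω] [MeasurableSpace Ω] [BorelSpace Ω]
    (σ : Ω → Ω) (hσ : Continuous σ) (f : Ω → ℝ) (hf : Continuous f) (fbar : ℝ)
    (hfin : ∀ ω : Ω, BddBelow (Set.range fun n : ℕ => birk σ (fun x => f x - fbar) (n + 1) ω)) :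
    (∀ μ : Measure Ω, IsMinimizing σ f fbar μ → μ (SolSet σ f fbar) = 1) ∧
    (Subtype.val ⁻¹' SolSet σ f fbar : Set (MatherSet σ f fbar)) ∈
      residual (MatherSet σ f fbar) := by
  set B := ⋂ k, σ^[k] ⁻¹' {ω | cohomDefect σ f fbar ω = 0}
  have hSol : SolSet σ f fbar = MatherSet σ f fbar ∩ B := solSet_eq_inter_iInter_preimage
  have hae (μ : Measure Ω) (hμ : IsMinimizing σ f fbar μ) : SolSet σ f fbar ∈ ae μ := by
    filter_upwards [μ.support_mem_ae, ae_forall_cohomDefect_iterate_eq_zero hσ hf hfin hμ]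
      with ω hsupp hB
    rw [hSol]
    exact ⟨⟨μ, hμ, (msupport_eq_support μ).symm ▸ hsupp⟩, Set.mem_iInter.2 hB⟩
  refine ⟨fun μ hμ => ?_, ?_⟩
  · have := hμ.1.1
    exact (measure_congr (ae_eq_univ.2 (hae μ hμ))).trans measure_univ
  · have hGδ : IsGδ B := .iInter fun k =>
      (isGδ_setOf_cohomDefect_eq_zero hσ hf hfin).preimage (hσ.iterate k)
    have hdense : Dense (Subtype.val ⁻¹' B : Set (MatherSet σ f fbar)) :=
      dense_preimage_val_of_forall_mem_support fun x ⟨μ, hμ, hx⟩ =>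
        ⟨μ, msupport_eq_support μ ▸ hx, hSol ▸ hae μ hμ⟩
    refine mem_of_superset (residual_of_dense_Gδ (hGδ.preimage continuous_subtype_val) hdense) ?_
    exact fun x hx => hSol ▸ ⟨x.2, hx⟩

/-- `μ(M) = 1` for every minimizing measure, and `M` is residual in the
Mather set. -/
theorem stmt3 [MetricSpace Ω] [CompactSpace Ω] [MeasurableSpace Ω] [BorelSpace Ω]
    (σ : Ω → Ω) (hσ : Continuous σ) (f : Ω → ℝ) (hf : Continuous f) (fbar : ℝ)
    (hfbar : IsErgMinValue σ f fbar)
    (hfin : ∀ ω : Ω, BddBelow (Set.range fun n : ℕ => birk σ (fun x => f x - fbar) (n + 1) ω)) :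
    (∀ μ : Measure Ω, IsMinimizing σ f fbar μ → μ (SolSet σ f fbar) = 1) ∧
    (Subtype.val ⁻¹' SolSet σ f fbar : Set (MatherSet σ f fbar)) ∈
      residual (MatherSet σ f fbar) :=
  stmt3_general σ hσ f hf fbar hfin
end
end

section
/- Let (Ω,σ) be a topological dynamical system with Ω compact metric and σ continuous, and let f ∈ C⁰(Ω). Then there exists ω* ∈ Ω such that for all n ≥ 1, (1/n) Σ_{k=0}^{n-1} f(σ^k(ω*)) ≤ min over invariant probability measures μ of ∫f dμ. -/
open MeasureTheory Filter Topology

noncomputable section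

variable {Ω : Type*}

section Aux

variable {Ω : Type*}

lemma birk_add' (σ : Ω → Ω) (g : Ω → ℝ) (m n : ℕ) (ω : Ω) :
    birk σ g (m + n) ω = birk σ g m ω + birk σ g n (σ^[m] ω) := by
  unfold birk
  rw [Finset.sum_range_add]
  congr 1
  refine Finset.sum_congr rfl fun k _ => ?_
  rw [add_comm, Function.iterate_add_apply]

lemma birk_cont [TopologicalSpace Ω] {σ : Ω → Ω} (hσ : Continuous σ) {g : Ω → ℝ}
    (hg : Continuous g) (n : ℕ) : Continuous (birk σ g n) :=
  continuous_finset_sum _ fun k _ => hg.comp (hσ.iterate k)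

lemma map_iterate_eq [MeasurableSpace Ω] {σ : Ω → Ω} (hσm : Measurable σ)
    {μ : MeasureTheory.Measure Ω} (hinv : MeasureTheory.Measure.map σ μ = μ) (k : ℕ) :
    MeasureTheory.Measure.map σ^[k] μ = μ := by
  induction k with
  | zero => simp
  | succ k ih =>
    rw [Function.iterate_succ, ← MeasureTheory.Measure.map_map (hσm.iterate k) hσm, hinv, ih]

end Aux

theorem stmt7' [MetricSpace Ω] [CompactSpace Ω] [Nonempty Ω] [MeasurableSpace Ω] [BorelSpace Ω]
    (σ : Ω → Ω) (hσ : Continuous σ) (f : Ω → ℝ) (hf : Continuous f) (fbar : ℝ)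
    (hfbar : IsErgMinValue σ f fbar) :
    ∃ ωstar : Ω, ∀ n : ℕ, 1 ≤ n → (1 / (n : ℝ)) * birk σ f n ωstar ≤ fbar := by
  by_contra hcon
  push_neg at hcon
  -- hcon : ∀ ω, ∃ n, 1 ≤ n ∧ fbar < 1/n * birk σ f n ω
  set g : Ω → ℝ := fun x => f x - fbar with hgdef
  have hgc : Continuous g := hf.sub continuous_const
  have hbg : ∀ n ω, birk σ g n ω = birk σ f n ω - n * fbar := by
    intro n ω
    simp [birk, hgdef, Finset.sum_sub_distrib, mul_comm]
  -- positivity of some Birkhoff sum at each point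
  have hpos : ∀ ω : Ω, ∃ n : ℕ, 0 < birk σ g (n + 1) ω := by
    intro ω
    obtain ⟨n, hn1, hn2⟩ := hcon ω
    obtain ⟨m, rfl⟩ : ∃ m, n = m + 1 := ⟨n - 1, (Nat.succ_pred_eq_of_pos hn1).symm⟩
    refine ⟨m, ?_⟩
    have hnpos : (0 : ℝ) < (m + 1 : ℕ) := by positivity
    rw [hbg]
    have : fbar * ((m + 1 : ℕ) : ℝ) < birk σ f (m + 1) ω := by
      rw [← lt_div_iff₀ hnpos] at *
      calc fbar < 1 / ((m+1 : ℕ) : ℝ) * birk σ f (m+1) ω := hn2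
        _ = birk σ f (m+1) ω / ((m+1:ℕ):ℝ) := by ring
    linarith [this]
  -- open cover indexed by (n, k)
  have hcover : (Set.univ : Set Ω) ⊆
      ⋃ p : ℕ × ℕ, {ω | (1 : ℝ) / (p.2 + 1) < birk σ g (p.1 + 1) ω} := by
    intro ω _
    obtain ⟨n, hn⟩ := hpos ω
    obtain ⟨k, hk⟩ := exists_nat_one_div_lt hn
    exact Set.mem_iUnion.2 ⟨⟨n, k⟩, hk⟩
  obtain ⟨t, ht⟩ := isCompact_univ.elim_finite_subcover
    (fun p : ℕ × ℕ => {ω | (1 : ℝ) / (p.2 + 1) < birk σ g (p.1 + 1) ω})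
    (fun p => isOpen_lt continuous_const (birk_cont hσ hgc _)) hcover
  set N : ℕ := (t.image Prod.fst).sup id + 1 with hNdef
  set K : ℕ := (t.image Prod.snd).sup id with hKdef
  set ε : ℝ := 1 / ((K : ℝ) + 1) with hεdef
  have hε : 0 < ε := by positivity
  have hN1 : (1 : ℝ) ≤ (N : ℝ) := by exact_mod_cast Nat.one_le_iff_ne_zero.2 (Nat.succ_ne_zero _)
  have hNpos : (0 : ℝ) < N := lt_of_lt_of_le one_pos hN1
  have key : ∀ ω : Ω, ∃ n : ℕ, 1 ≤ n ∧ n ≤ N ∧ ε ≤ birk σ g n ω := by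
    intro ω
    obtain ⟨p, hpt, hpω⟩ := Set.mem_iUnion₂.1 (ht (Set.mem_univ ω))
    refine ⟨p.1 + 1, Nat.succ_le_succ (Nat.zero_le _), ?_, ?_⟩
    · have : p.1 ≤ (t.image Prod.fst).sup id :=
        Finset.le_sup (f := id) (Finset.mem_image_of_mem Prod.fst hpt)
      omega
    · have h2 : p.2 ≤ K := Finset.le_sup (f := id) (Finset.mem_image_of_mem Prod.snd hpt)
      have : ε ≤ (1 : ℝ) / (p.2 + 1) := Nat.one_div_le_one_div h2
      exact le_of_lt (lt_of_le_of_lt this hpω)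
  -- uniform bound on g
  obtain ⟨M, hM⟩ : ∃ M, ∀ x, ‖g x‖ ≤ M :=
    hgc.bounded_above_of_compact_support (HasCompactSupport.of_compactSpace g)
  have hM0 : 0 ≤ M := le_trans (norm_nonneg _) (hM (Classical.arbitrary Ω))
  have hlow : ∀ (T : ℕ) (ω : Ω), -((T : ℝ) * M) ≤ birk σ g T ω := by
    intro T ω
    have : ∑ k ∈ Finset.range T, (-M) ≤ ∑ k ∈ Finset.range T, g (σ^[k] ω) :=
      Finset.sum_le_sum fun k _ => neg_le_of_abs_le (hM _)
    simpa [birk, mul_comm] using this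
  set C : ℝ := N * M + N * ε with hCdef
  -- key inductive claim
  have claim : ∀ T : ℕ, ∀ ω : Ω, ε * T / N - C ≤ birk σ g T ω := by
    intro T
    induction T using Nat.strong_induction_on with
    | _ T ih =>
      intro ω
      by_cases hT : T ≤ N
      · have h1 : -((T : ℝ) * M) ≤ birk σ g T ω := hlow T ω
        have hTN : (T : ℝ) ≤ N := by exact_mod_cast hT
        have h2 : ε * T / N ≤ ε := by
          rw [div_le_iff₀ hNpos]
          nlinarith
        have h3 : (T : ℝ) * M ≤ N * M := by nlinarith
        have h4 : ε ≤ N * ε := by nlinarith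
        simp only [hCdef]
        linarith
      · push_neg at hT
        obtain ⟨n, hn1, hnN, hnb⟩ := key ω
        have hnT : n ≤ T := le_trans hnN (le_of_lt hT)
        have hlt : T - n < T := Nat.sub_lt (lt_of_lt_of_le (lt_of_le_of_lt (Nat.zero_le _) hT) le_rfl) hn1
        have hih := ih (T - n) hlt (σ^[n] ω)
        have hdecomp : birk σ g T ω = birk σ g n ω + birk σ g (T - n) (σ^[n] ω) := by
          conv_lhs => rw [← Nat.add_sub_cancel' hnT]
          exact birk_add' σ g n (T - n) ω
        have hcast : ((T - n : ℕ) : ℝ) = (T : ℝ) - n := by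
          rw [Nat.cast_sub hnT]
        have hnN' : (n : ℝ) ≤ N := by exact_mod_cast hnN
        have hfrac : ε * T / N ≤ ε + ε * ((T - n : ℕ) : ℝ) / N := by
          rw [hcast]
          have h0 : 0 ≤ ε * ((N : ℝ) - n) / N :=
            div_nonneg (mul_nonneg hε.le (by linarith)) hNpos.le
          have heq : ε + ε * ((T : ℝ) - n) / N - ε * T / N = ε * ((N : ℝ) - n) / N := by
            field_simp
            ring
          linarith
        linarith [hih, hnb, hfrac, hdecomp.ge, hdecomp.le]
  -- the minimizing measure
  obtain ⟨μ, ⟨hprob, hinvm⟩, hint⟩ := hfbar.1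
  haveI := hprob
  have hσm : Measurable σ := hσ.measurable
  have hgint : Integrable g μ :=
    hgc.integrable_of_hasCompactSupport (HasCompactSupport.of_compactSpace g)
  have hgint0 : ∫ x, g x ∂μ = 0 := by
    have : ∫ x, g x ∂μ = (∫ x, f x ∂μ) - fbar := by
      rw [hgdef]
      rw [integral_sub (hf.integrable_of_hasCompactSupport (HasCompactSupport.of_compactSpace f))
        (integrable_const fbar)]
      simp
    rw [this, hint, sub_self]
  have hintbirk : ∀ T : ℕ, ∫ ω, birk σ g T ω ∂μ = 0 := by
    intro T
    have hterm : ∀ k : ℕ, ∫ ω, g (σ^[k] ω) ∂μ = 0 := by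
      intro k
      have : ∫ ω, g (σ^[k] ω) ∂μ = ∫ x, g x ∂(MeasureTheory.Measure.map σ^[k] μ) :=
        (integral_map (hσm.iterate k).aemeasurable hgc.aestronglyMeasurable).symm
      rw [this, map_iterate_eq hσm hinvm k, hgint0]
    have : ∫ ω, birk σ g T ω ∂μ = ∑ k ∈ Finset.range T, ∫ ω, g (σ^[k] ω) ∂μ := by
      unfold birk
      exact integral_finset_sum _ fun k _ =>
        (hgc.comp (hσ.iterate k)).integrable_of_hasCompactSupport
          (HasCompactSupport.of_compactSpace _)
    rw [this]
    exact Finset.sum_eq_zero fun k _ => hterm k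
  -- contradiction
  obtain ⟨T, hTlarge⟩ := exists_nat_gt ((C + 1) * N / ε)
  have hbound : ε * T / N - C ≤ ∫ ω, birk σ g T ω ∂μ := by
    have hcint : Integrable (fun _ : Ω => ε * T / N - C) μ := integrable_const _
    have hbint : Integrable (birk σ g T) μ :=
      (birk_cont hσ hgc T).integrable_of_hasCompactSupport (HasCompactSupport.of_compactSpace _)
    calc ε * T / N - C = ∫ _ : Ω, (ε * T / N - C) ∂μ := by simp
      _ ≤ ∫ ω, birk σ g T ω ∂μ := integral_mono hcint hbint fun ω => claim T ω
  rw [hintbirk T] at hbound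
  have h5 : ε * T ≤ C * N := (div_le_iff₀ hNpos).1 (by linarith [hbound])
  have : (T : ℝ) ≤ (C + 1) * N / ε := by
    rw [le_div_iff₀ hε]
    nlinarith [hNpos]
  linarith

/-- Morris, Prop. A.7: a point whose Birkhoff averages never exceed
the ergodic minimizing value. -/
theorem stmt7 [MetricSpace Ω] [CompactSpace Ω] [Nonempty Ω] [MeasurableSpace Ω] [BorelSpace Ω]
    (σ : Ω → Ω) (hσ : Continuous σ) (f : Ω → ℝ) (hf : Continuous f) (fbar : ℝ)
    (hfbar : IsErgMinValue σ f fbar) :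
    ∃ ωstar : Ω, ∀ n : ℕ, 1 ≤ n → (1 / (n : ℝ)) * birk σ f n ωstar ≤ fbar := by
  exact stmt7' σ hσ f hf fbar hfbar
end
end

section
/- Let (Ω,σ) be a minimal topological dynamical system and f ∈ C⁰(Ω) with ergodic minimizing value f̄. Suppose there exists ω* ∈ Ω and C ≥ 0 with -C ≤ Σ_{k=0}^{n-1}(f - f̄)(σ^k(ω*)) ≤ 0 for all n ≥ 1. Then for all ω ∈ Ω and n ≥ 1, Σ_{k=0}^{n-1}(f - f̄)(σ^k(ω)) ≥ -C. -/
open MeasureTheory Filter Topology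

noncomputable section

variable {Ω : Type*}

/-- transfer of the lower bound along a dense orbit on a minimal system. -/
theorem stmt9 [MetricSpace Ω] [CompactSpace Ω] [MeasurableSpace Ω] [BorelSpace Ω]
    (σ : Ω → Ω) (hσ : Continuous σ)
    (hmin : ∀ ω : Ω, Dense (Set.range fun n : ℕ => σ^[n] ω))
    (f : Ω → ℝ) (hf : Continuous f) (fbar : ℝ) (hfbar : IsErgMinValue σ f fbar)
    (ωstar : Ω) (C : ℝ) (hC : 0 ≤ C)
    (hbd : ∀ n : ℕ, 1 ≤ n → -C ≤ birk σ (fun x => f x - fbar) n ωstar ∧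
      birk σ (fun x => f x - fbar) n ωstar ≤ 0) :
    ∀ ω : Ω, ∀ n : ℕ, 1 ≤ n → birk σ (fun x => f x - fbar) n ω ≥ -C := by
  intro ω n hn
  set g : Ω → ℝ := fun x => f x - fbar with hg
  have hgc : Continuous g := hf.sub continuous_const
  have hbc : Continuous (birk σ g n) := by
    unfold birk
    exact continuous_finset_sum _ fun k _ => hgc.comp (hσ.iterate k)
  have hsplit : ∀ m k : ℕ, birk σ g (m + k) ωstar
      = birk σ g m ωstar + birk σ g k (σ^[m] ωstar) := by
    intro m k
    unfold birk
    rw [Finset.sum_range_add]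
    congr 1
    refine Finset.sum_congr rfl fun i _ => ?_
    rw [add_comm m i, Function.iterate_add_apply]
  have horb : ∀ m : ℕ, birk σ g n (σ^[m] ωstar) ≥ -C := by
    intro m
    have h1 : birk σ g n (σ^[m] ωstar)
        = birk σ g (m + n) ωstar - birk σ g m ωstar := by
      rw [hsplit m n]; ring
    rcases Nat.eq_zero_or_pos m with hm | hm
    · subst hm
      have h0 : birk σ g 0 ωstar = 0 := by simp [birk]
      rw [h1, h0, sub_zero, Nat.zero_add]
      exact (hbd n hn).1
    · have hA := (hbd (m + n) (by omega)).1
      have hB := (hbd m hm).2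
      rw [h1]; linarith
  have hclosed : IsClosed {x : Ω | birk σ g n x ≥ -C} :=
    isClosed_le continuous_const hbc
  have hsub : Set.range (fun m : ℕ => σ^[m] ωstar) ⊆ {x : Ω | birk σ g n x ≥ -C} := by
    rintro x ⟨m, rfl⟩; exact horb m
  have : (Set.univ : Set Ω) ⊆ {x : Ω | birk σ g n x ≥ -C} := by
    rw [← (hmin ωstar).closure_eq]
    exact hclosed.closure_subset_iff.mpr hsub
  exact this (Set.mem_univ ω)
end
end

section
/- Let (Ω,σ) be a topological dynamical system and f a balanced coboundary: f = u∘σ - u with u continuous and ∫u dμ independent of the invariant probability measure μ. Then there exists a unique continuous u₀ with f = u₀∘σ - u₀ and ∫u₀ dμ = 0 for all invariant μ, and the discounted solutions U_ε[f] converge uniformly on Ω to u₀ as ε → 0. -/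
open MeasureTheory Filter Topology
open scoped ENNReal

noncomputable section

variable {Ω : Type*}

/-- The discounted solution `U_ε[f](ω) = -∑_{k≥0} (1-ε)^k f(σ^k ω)`. -/
def Udisc (σ : Ω → Ω) (f : Ω → ℝ) (ε : ℝ) (ω : Ω) : ℝ :=
  -∑' k : ℕ, (1 - ε) ^ k * f (σ^[k] ω)

/-- The discounted measure `μ_{ε,ω} = ∑_{k≥0} ε(1-ε)^k δ_{σ^k ω}`. -/
def discMeas [MeasurableSpace Ω] (σ : Ω → Ω) (ε : ℝ) (ω : Ω) : Measure Ω :=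
  Measure.sum fun k : ℕ => ENNReal.ofReal (ε * (1 - ε) ^ k) • Measure.dirac (σ^[k] ω)

/-- The empirical measure `A_{m,ω} = (1/m) ∑_{k=0}^{m-1} δ_{σ^k ω}`. -/
def empMeas [MeasurableSpace Ω] (σ : Ω → Ω) (m : ℕ) (ω : Ω) : Measure Ω :=
  ((m : ℝ≥0∞)⁻¹) • ∑ k ∈ Finset.range m, Measure.dirac (σ^[k] ω)

/-!
Put `u₀ := u - c`. Telescoping gives `U_ε[f](ω) = u₀(ω) - ∫ u₀ ∘ σ dμ_{ε,ω}`, and `u₀ ∘ σ` has zero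
integral against every invariant measure, so it suffices that `∫ φ dμ_{ε,ω} → 0` uniformly in `ω`
for every such `φ`. The discounted measures are asymptotically invariant,
`|∫ g ∘ σ dμ_{ε,ω} - ∫ g dμ_{ε,ω}| ≤ 2 ε ‖g‖`, so by compactness of the space of probability
measures every limit of them along an ultrafilter is invariant, which gives the uniform convergence.
For uniqueness, the difference `w` of two normalized transfer functions is `σ`-invariant, hence
`∫ w dμ_{ε,ω} = w(ω)` for all `ε`, and the same convergence forces `w = 0`.
-/

open Set BoundedContinuousFunction

theorem summable_geometric_mul_of_norm_le {r C : ℝ} (hr₀ : 0 ≤ r) (hr₁ : r < 1) {a : ℕ → ℝ}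
    (ha : ∀ k, ‖a k‖ ≤ C) : Summable fun k => r ^ k * a k :=
  .of_norm_bounded ((summable_geometric_of_lt_one hr₀ hr₁).mul_right C) fun k => by
    rw [norm_mul, norm_pow, Real.norm_of_nonneg hr₀]
    exact mul_le_mul_of_nonneg_left (ha k) (pow_nonneg hr₀ k)

theorem tsum_geometric_mul_orbit [TopologicalSpace Ω] (σ : Ω → Ω) {r : ℝ} (hr₀ : 0 ≤ r)
    (hr₁ : r < 1) (g : Ω →ᵇ ℝ) (ω : Ω) :
    ∑' k, r ^ k * g (σ^[k] ω) = g ω + r * ∑' k, r ^ k * g (σ (σ^[k] ω)) := by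
  rw [(summable_geometric_mul_of_norm_le hr₀ hr₁ fun k => g.norm_coe_le_norm _).tsum_eq_zero_add,
    ← tsum_mul_left]
  congr 1
  · simp
  · exact tsum_congr fun k => by rw [Function.iterate_succ_apply', pow_succ]; ring

section Discounted

variable [MeasurableSpace Ω] (σ : Ω → Ω) {ε : ℝ}

theorem isProbabilityMeasure_discMeas (hε₀ : 0 < ε) (hε₁ : ε ≤ 1) (ω : Ω) :
    IsProbabilityMeasure (discMeas σ ε ω) := by
  have hr₀ : 0 ≤ 1 - ε := by linarith
  have hr₁ : 1 - ε < 1 := by linarith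
  constructor
  simp only [discMeas, Measure.sum_apply _ MeasurableSet.univ, Measure.smul_apply, measure_univ,
    smul_eq_mul, mul_one]
  rw [← ENNReal.ofReal_tsum_of_nonneg (fun k => mul_nonneg hε₀.le (pow_nonneg hr₀ k))
    ((summable_geometric_of_lt_one hr₀ hr₁).mul_left ε), tsum_mul_left,
    tsum_geometric_of_lt_one hr₀ hr₁, sub_sub_cancel, mul_inv_cancel₀ hε₀.ne', ENNReal.ofReal_one]

/-- `discMeas` bundled as a probability measure, with junk value `δ_ω` outside `(0, 1]`. -/
def discProb (ε : ℝ) (ω : Ω) : ProbabilityMeasure Ω :=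
  if h : ε ∈ Ioc 0 1 then ⟨discMeas σ ε ω, isProbabilityMeasure_discMeas σ h.1 h.2 ω⟩
  else ⟨Measure.dirac ω, inferInstance⟩

theorem coe_discProb (hε : ε ∈ Ioc 0 1) (ω : Ω) :
    (discProb σ ε ω : Measure Ω) = discMeas σ ε ω := by
  simp [discProb, hε]

variable [TopologicalSpace Ω] [OpensMeasurableSpace Ω]

theorem integral_discMeas (hε₀ : 0 < ε) (hε₁ : ε ≤ 1) (ω : Ω) (g : Ω →ᵇ ℝ) :
    ∫ x, g x ∂discMeas σ ε ω = ε * ∑' k, (1 - ε) ^ k * g (σ^[k] ω) := by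
  have := isProbabilityMeasure_discMeas σ hε₀ hε₁ ω
  have hg := g.integrable (discMeas σ ε ω)
  rw [discMeas] at hg ⊢
  rw [integral_sum_measure hg, ← tsum_mul_left]
  refine tsum_congr fun k => ?_
  rw [integral_smul_measure, integral_dirac' _ _ g.continuous.stronglyMeasurable,
    ENNReal.toReal_ofReal (mul_nonneg hε₀.le (pow_nonneg (by linarith) k)), smul_eq_mul, mul_assoc]

variable {σ} (hσ : Continuous σ)
include hσ

theorem integral_comp_discMeas (hε₀ : 0 < ε) (hε₁ : ε ≤ 1) (ω : Ω) (g : Ω →ᵇ ℝ) :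
    ∫ x, g (σ x) ∂discMeas σ ε ω = ε * ∑' k, (1 - ε) ^ k * g (σ (σ^[k] ω)) :=
  integral_discMeas σ hε₀ hε₁ ω (g.compContinuous ⟨σ, hσ⟩)

theorem integral_discMeas_eq_add_integral_comp (hε₀ : 0 < ε) (hε₁ : ε ≤ 1) (ω : Ω)
    (g : Ω →ᵇ ℝ) :
    ∫ x, g x ∂discMeas σ ε ω = ε * g ω + (1 - ε) * ∫ x, g (σ x) ∂discMeas σ ε ω := by
  rw [integral_discMeas σ hε₀ hε₁ ω, integral_comp_discMeas hσ hε₀ hε₁ ω,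
    tsum_geometric_mul_orbit σ (by linarith) (by linarith)]
  ring

theorem integral_discMeas_of_comp_eq (hε₀ : 0 < ε) (hε₁ : ε ≤ 1) (ω : Ω) {g : Ω →ᵇ ℝ}
    (hg : ∀ x, g (σ x) = g x) : ∫ x, g x ∂discMeas σ ε ω = g ω := by
  have h := integral_discMeas_eq_add_integral_comp hσ hε₀ hε₁ ω g
  simp only [hg] at h
  exact mul_left_cancel₀ hε₀.ne' (by linarith)

theorem abs_integral_comp_sub_integral_discMeas_le (hε₀ : 0 < ε) (hε₁ : ε ≤ 1) (ω : Ω)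
    (g : Ω →ᵇ ℝ) :
    |∫ x, g (σ x) ∂discMeas σ ε ω - ∫ x, g x ∂discMeas σ ε ω| ≤ 2 * ‖g‖ * ε := by
  have := isProbabilityMeasure_discMeas σ hε₀ hε₁ ω
  have hcomp : |∫ x, g (σ x) ∂discMeas σ ε ω| ≤ ‖g‖ :=
    (norm_integral_le_norm _ (g.compContinuous ⟨σ, hσ⟩)).trans (norm_compContinuous_le _ _)
  have hω : |g ω| ≤ ‖g‖ := g.norm_coe_le_norm ω
  rw [integral_discMeas_eq_add_integral_comp hσ hε₀ hε₁ ω g,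
    show ∀ a b : ℝ, a - (ε * b + (1 - ε) * a) = ε * (a - b) by intros; ring, abs_mul,
    abs_of_pos hε₀]
  calc ε * |∫ x, g (σ x) ∂discMeas σ ε ω - g ω| ≤ ε * (‖g‖ + ‖g‖) := by
        gcongr; exact (abs_sub _ _).trans (add_le_add hcomp hω)
    _ = 2 * ‖g‖ * ε := by ring

theorem Udisc_eq_sub_integral (hε₀ : 0 < ε) (hε₁ : ε ≤ 1) (ω : Ω) (u : Ω →ᵇ ℝ) {f : Ω → ℝ}
    (hf : ∀ x, f x = u (σ x) - u x) :
    Udisc σ f ε ω = u ω - ∫ x, u (σ x) ∂discMeas σ ε ω := by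
  have hr₀ : 0 ≤ 1 - ε := by linarith
  have hr₁ : 1 - ε < 1 := by linarith
  have hs₀ := summable_geometric_mul_of_norm_le hr₀ hr₁ fun k => u.norm_coe_le_norm (σ^[k] ω)
  have hs₁ := summable_geometric_mul_of_norm_le hr₀ hr₁ fun k => u.norm_coe_le_norm (σ (σ^[k] ω))
  have hsplit : Udisc σ f ε ω =
      ∑' k, (1 - ε) ^ k * u (σ^[k] ω) - ∑' k, (1 - ε) ^ k * u (σ (σ^[k] ω)) := by
    simp only [Udisc, hf, mul_sub]
    rw [hs₁.tsum_sub hs₀, neg_sub]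
  rw [hsplit, integral_comp_discMeas hσ hε₀ hε₁ ω, tsum_geometric_mul_orbit σ hr₀ hr₁]
  ring

end Discounted

section Invariant

variable [TopologicalSpace Ω] [MeasurableSpace Ω] [BorelSpace Ω] [HasOuterApproxClosed Ω]
  {σ : Ω → Ω} (hσ : Continuous σ)
include hσ

theorem isInvProb_of_tendsto {ι : Type*} {L : Filter ι} [L.NeBot] {ν : ι → ProbabilityMeasure Ω}
    {μ : ProbabilityMeasure Ω} (hμ : Tendsto ν L (𝓝 μ))
    (hν : ∀ g : Ω →ᵇ ℝ, Tendsto (fun i => ∫ x, g (σ x) ∂ν i - ∫ x, g x ∂ν i) L (𝓝 0)) :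
    IsInvProb σ (μ : Measure Ω) := by
  refine ⟨inferInstance, ext_of_forall_integral_eq_of_IsFiniteMeasure fun g => ?_⟩
  have hlim := (ProbabilityMeasure.tendsto_iff_forall_integral_tendsto.1 hμ
    (g.compContinuous ⟨σ, hσ⟩)).sub (ProbabilityMeasure.tendsto_iff_forall_integral_tendsto.1 hμ g)
  rw [integral_map hσ.aemeasurable g.continuous.aestronglyMeasurable]
  exact sub_eq_zero.1 (tendsto_nhds_unique hlim (hν g))

variable [T2Space Ω] [CompactSpace Ω]

theorem tendsto_integral_of_tendsto_integral_comp_sub {ι : Type*} {L : Filter ι}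
    {ν : ι → ProbabilityMeasure Ω}
    (hν : ∀ g : Ω →ᵇ ℝ, Tendsto (fun i => ∫ x, g (σ x) ∂ν i - ∫ x, g x ∂ν i) L (𝓝 0))
    (φ : Ω →ᵇ ℝ) (hφ : ∀ μ : Measure Ω, IsInvProb σ μ → ∫ x, φ x ∂μ = 0) :
    Tendsto (fun i => ∫ x, φ x ∂ν i) L (𝓝 0) := by
  refine (tendsto_iff_ultrafilter _ _ _).2 fun U hU => ?_
  obtain ⟨μ, -, hμ⟩ := isCompact_univ.ultrafilter_le_nhds (U.map ν) (by simp)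
  have hlim : Tendsto ν U (𝓝 μ) := hμ
  have hinv := isInvProb_of_tendsto hσ hlim fun g => (hν g).mono_left hU
  simpa [hφ μ hinv] using ProbabilityMeasure.tendsto_iff_forall_integral_tendsto.1 hlim φ

theorem tendstoUniformly_integral_discMeas (φ : Ω →ᵇ ℝ)
    (hφ : ∀ μ : Measure Ω, IsInvProb σ μ → ∫ x, φ x ∂μ = 0) :
    TendstoUniformly (fun ε ω => ∫ x, φ x ∂discMeas σ ε ω) 0 (𝓝[>] 0) := by
  have hIoc : ∀ᶠ p : ℝ × Ω in 𝓝[>] 0 ×ˢ ⊤, p.1 ∈ Ioc 0 1 :=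
    Eventually.prod_inl (Ioc_mem_nhdsGT one_pos) ⊤
  have hε : Tendsto (fun p : ℝ × Ω => p.1) (𝓝[>] 0 ×ˢ ⊤) (𝓝 0) :=
    (tendsto_nhdsWithin_of_tendsto_nhds tendsto_id).comp tendsto_fst
  have hν : ∀ g : Ω →ᵇ ℝ, Tendsto (fun p : ℝ × Ω => ∫ x, g (σ x) ∂discProb σ p.1 p.2 -
      ∫ x, g x ∂discProb σ p.1 p.2) (𝓝[>] 0 ×ˢ ⊤) (𝓝 0) := fun g => by
    refine squeeze_zero_norm' ?_ (by simpa using hε.const_mul (2 * ‖g‖))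
    filter_upwards [hIoc] with p hp
    rw [coe_discProb σ hp]
    exact abs_integral_comp_sub_integral_discMeas_le hσ hp.1 hp.2 p.2 g
  have h := tendsto_integral_of_tendsto_integral_comp_sub hσ hν φ hφ
  refine tendstoUniformly_iff_tendsto.2 (Uniform.tendsto_nhds_right.1 (h.congr' ?_))
  filter_upwards [hIoc] with p hp
  rw [coe_discProb σ hp]

theorem eq_zero_of_comp_eq_of_integral_eq_zero {w : Ω →ᵇ ℝ} (hw : ∀ x, w (σ x) = w x)
    (hint : ∀ μ : Measure Ω, IsInvProb σ μ → ∫ x, w x ∂μ = 0) (ω : Ω) : w ω = 0 := by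
  refine tendsto_nhds_unique (tendsto_const_nhds.congr' ?_)
    ((tendstoUniformly_integral_discMeas hσ w hint).tendsto_at ω)
  filter_upwards [Ioc_mem_nhdsGT one_pos] with ε hε
  exact (integral_discMeas_of_comp_eq hσ hε.1 hε.2 ω hw).symm

end Invariant

theorem stmt14_general [MetricSpace Ω] [CompactSpace Ω] [MeasurableSpace Ω] [BorelSpace Ω]
    (σ : Ω → Ω) (hσ : Continuous σ) (f : Ω → ℝ)
    (u : Ω → ℝ) (hu : Continuous u) (hfu : ∀ ω : Ω, f ω = u (σ ω) - u ω)
    (c : ℝ) (hbal : ∀ μ : Measure Ω, IsInvProb σ μ → ∫ x, u x ∂μ = c) :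
    ∃ u₀ : Ω → ℝ,
      (Continuous u₀ ∧ (∀ ω : Ω, f ω = u₀ (σ ω) - u₀ ω) ∧
        ∀ μ : Measure Ω, IsInvProb σ μ → ∫ x, u₀ x ∂μ = 0) ∧
      (∀ v : Ω → ℝ, Continuous v → (∀ ω : Ω, f ω = v (σ ω) - v ω) →
        (∀ μ : Measure Ω, IsInvProb σ μ → ∫ x, v x ∂μ = 0) → v = u₀) ∧
      TendstoUniformly (fun (ε : ℝ) => Udisc σ f ε) u₀ (𝓝[>] (0 : ℝ)) := by
  set u₀ : Ω →ᵇ ℝ := mkOfCompact ⟨u, hu⟩ - const Ω c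
  have hcob : ∀ ω, f ω = u₀ (σ ω) - u₀ ω := fun ω => by simp [u₀, hfu]
  have hint : ∀ μ : Measure Ω, IsInvProb σ μ → ∫ x, u₀ x ∂μ = 0 := fun μ hμ => by
    have := hμ.1
    have hu_int : Integrable u μ := (mkOfCompact ⟨u, hu⟩).integrable μ
    simp [u₀, integral_sub hu_int (integrable_const c), hbal μ hμ]
  have hint_comp : ∀ μ : Measure Ω, IsInvProb σ μ → ∫ x, u₀ (σ x) ∂μ = 0 := fun μ hμ => by
    rw [← integral_map hσ.aemeasurable u₀.continuous.aestronglyMeasurable, hμ.2, hint μ hμ]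
  refine ⟨u₀, ⟨u₀.continuous, hcob, hint⟩, fun v hv hvcob hvint => ?_, ?_⟩
  · funext ω
    refine sub_eq_zero.1 (eq_zero_of_comp_eq_of_integral_eq_zero hσ (w := mkOfCompact ⟨v, hv⟩ - u₀)
      (fun x => ?_) (fun μ hμ => ?_) ω)
    · simp only [coe_sub, Pi.sub_apply, mkOfCompact_apply, ContinuousMap.coe_mk]
      linarith [hcob x, hvcob x]
    · have := hμ.1
      have hv_int : Integrable v μ := (mkOfCompact ⟨v, hv⟩).integrable μ
      simp [integral_sub hv_int (u₀.integrable μ), hvint μ hμ, hint μ hμ]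
  · refine Metric.tendstoUniformly_iff.2 fun δ hδ => ?_
    filter_upwards [Metric.tendstoUniformly_iff.1
      (tendstoUniformly_integral_discMeas hσ (u₀.compContinuous ⟨σ, hσ⟩) hint_comp) δ hδ,
      Ioc_mem_nhdsGT one_pos] with ε hsmall hε ω
    rw [Udisc_eq_sub_integral hσ hε.1 hε.2 ω u₀ hcob]
    simpa using hsmall ω

/-- for a balanced coboundary, the discounted solutions converge
uniformly to the unique zero-normalized transfer function. -/
theorem stmt14 [MetricSpace Ω] [CompactSpace Ω] [MeasurableSpace Ω] [BorelSpace Ω]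
    (σ : Ω → Ω) (hσ : Continuous σ) (f : Ω → ℝ) (hf : Continuous f)
    (u : Ω → ℝ) (hu : Continuous u) (hfu : ∀ ω : Ω, f ω = u (σ ω) - u ω)
    (c : ℝ) (hbal : ∀ μ : Measure Ω, IsInvProb σ μ → ∫ x, u x ∂μ = c) :
    ∃ u₀ : Ω → ℝ,
      (Continuous u₀ ∧ (∀ ω : Ω, f ω = u₀ (σ ω) - u₀ ω) ∧
        ∀ μ : Measure Ω, IsInvProb σ μ → ∫ x, u₀ x ∂μ = 0) ∧
      (∀ v : Ω → ℝ, Continuous v → (∀ ω : Ω, f ω = v (σ ω) - v ω) →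
        (∀ μ : Measure Ω, IsInvProb σ μ → ∫ x, v x ∂μ = 0) → v = u₀) ∧
      TendstoUniformly (fun (ε : ℝ) => Udisc σ f ε) u₀ (𝓝[>] (0 : ℝ)) :=
  stmt14_general σ hσ f u hu hfu c hbal
end
end

section
/- Let (Ω,σ) be a minimal topological dynamical system, u ∈ C⁰(Ω), and μ₀, μ₁ two ergodic σ-invariant probability measures. Then there exists a residual subset M ⊆ Ω such that for every ω ∈ M there is a strictly increasing sequence of integers (N_p)_{p≥1} with N_p < ln(N_{p+1}) for all p, and such that for every p ≥ 1 and every integer n with ln(N_p) < n < N_p, |(1/n) Σ_{k=0}^{n-1} u(σ^{k}(ω)) - ∫u dμ_{[p]}| < 1/p, where [p] = p mod 2. -/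
open MeasureTheory Filter Topology
open scoped ENNReal

noncomputable section

variable {Ω : Type*}

/-!
For an ergodic `μ` and a bounded measurable `g`, the `limsup` of the Birkhoff averages of `g` is
invariant under the map, hence a.e. equal to a constant `c`. If `s < c`, then a.e. some Birkhoff
sum of `g - s` is positive, and the Katznelson–Weiss covering argument turns this into
`s ≤ ∫ g`; applied to `g` and `-g` this is Birkhoff's pointwise ergodic theorem for bounded
observables.

Each `μᵢ` thus has a point whose averages of `u` tend to `∫ u dμᵢ`. Convergence passes along orbits
and orbits are dense, so such points are dense. A convergent point satisfies, for all large `N`,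
the open condition "all averages of length `n ∈ (log N, N)` are `1/p`-close to `∫ u dμᵢ`", so the
points satisfying it for infinitely many `N` form a dense `G_δ`. Intersecting over `p ≥ 1` with
`i = p mod 2` gives the residual set, and the scales `N_p` are chosen recursively with
`N_p < log N_{p+1}`.
-/

open Function

section BirkhoffAverage

variable {α : Type*} {f : α → α} {g h : α → ℝ} {C K : ℝ}

lemma abs_birkhoffSum_le (hC : ∀ x, |g x| ≤ C) (n : ℕ) (x : α) :
    |birkhoffSum f g n x| ≤ n * C :=
  (Finset.abs_sum_le_sum_abs _ _).trans <| by
    simpa using Finset.sum_le_sum fun k (_ : k ∈ Finset.range n) => hC (f^[k] x)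

lemma abs_birkhoffAverage_le (hC : ∀ x, |g x| ≤ C) (n : ℕ) (x : α) :
    |birkhoffAverage ℝ f g n x| ≤ C := by
  rcases n.eq_zero_or_pos with rfl | hn
  · simpa using (abs_nonneg _).trans (hC x)
  rw [birkhoffAverage, smul_eq_mul, abs_mul, abs_inv, Nat.abs_cast,
    inv_mul_le_iff₀ (by positivity)]
  exact abs_birkhoffSum_le hC n x

/- Katznelson–Weiss covering: the orbit segment of length `N` splits into single steps from the
set where no Birkhoff sum of length `≤ M` is positive (each costing at most `K`), blocks of length
`≤ M` with positive Birkhoff sum, and one final incomplete block (costing at most `K * M`). -/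
lemma neg_le_birkhoffSum_of_abs_le (hK : ∀ x, |h x| ≤ K) (M N : ℕ) (x : α) :
    -(K * (birkhoffSum f ({y | ∀ n ≤ M, birkhoffSum f h n y ≤ 0}.indicator 1) N x + M))
      ≤ birkhoffSum f h N x := by
  set E := {y | ∀ n ≤ M, birkhoffSum f h n y ≤ 0}
  have hK0 : 0 ≤ K := (abs_nonneg _).trans (hK x)
  have hE0 : ∀ n y, 0 ≤ birkhoffSum f (E.indicator (1 : α → ℝ)) n y := fun n y =>
    Finset.sum_nonneg fun k _ => Set.indicator_nonneg (fun _ _ => zero_le_one) _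
  induction N using Nat.strong_induction_on generalizing x with
  | _ N ih =>
  by_cases hx : x ∈ E
  · rcases N with _ | N
    · simp only [birkhoffSum_zero, zero_add, Left.neg_nonpos_iff]; positivity
    have := ih N N.lt_succ_self (f x)
    rw [birkhoffSum_succ', birkhoffSum_succ', Set.indicator_of_mem hx, Pi.one_apply]
    linarith [neg_le_of_abs_le (hK x)]
  · obtain ⟨n, hnM, hn⟩ : ∃ n ≤ M, 0 < birkhoffSum f h n x := by simpa [E] using hx
    by_cases hnN : n ≤ N
    · obtain ⟨m, rfl⟩ := Nat.exists_eq_add_of_le hnN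
      have hm : m < n + m := by
        rcases n with _ | n
        · simp at hn
        · omega
      have := ih m hm (f^[n] x)
      rw [birkhoffSum_add, birkhoffSum_add]
      nlinarith [mul_nonneg hK0 (hE0 n x)]
    · have h1 := abs_birkhoffSum_le (f := f) hK N x
      have h2 : (N : ℝ) ≤ M := by exact_mod_cast (not_le.1 hnN).le.trans hnM
      nlinarith [mul_nonneg hK0 (hE0 N x), (abs_le.1 h1).1, mul_le_mul_of_nonneg_left h2 hK0]

lemma limsup_eq_limsup_of_tendsto_sub {ι : Type*} {l : Filter ι} [l.NeBot] {u v : ι → ℝ}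
    (hu : ∀ i, |u i| ≤ C) (hv : ∀ i, |v i| ≤ C) (huv : Tendsto (fun i => u i - v i) l (𝓝 0)) :
    limsup u l = limsup v l := by
  suffices key : ∀ {u v : ι → ℝ}, (∀ i, |u i| ≤ C) → (∀ i, |v i| ≤ C) →
      Tendsto (fun i => u i - v i) l (𝓝 0) → limsup u l ≤ limsup v l from
    le_antisymm (key hu hv huv) (key hv hu (by simpa using huv.neg))
  intro u v hu hv huv
  have hbdd : ∀ {w : ι → ℝ}, (∀ i, |w i| ≤ C) → l.IsBoundedUnder (· ≤ ·) w ∧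
      l.IsCoboundedUnder (· ≤ ·) w := fun hw =>
    ⟨isBoundedUnder_of ⟨C, fun i => (abs_le.1 (hw i)).2⟩,
      (isBoundedUnder_of ⟨-C, fun i => (abs_le.1 (hw i)).1⟩).isCoboundedUnder_le⟩
  refine le_of_forall_pos_le_add fun ε hε => ?_
  rw [← limsup_add_const l v ε (hbdd hv).1 (hbdd hv).2]
  refine limsup_le_limsup ?_ (hbdd hu).2 (isBoundedUnder_of ⟨C + ε, fun i => ?_⟩)
  · filter_upwards [huv (Iio_mem_nhds hε)] with i hi
    simp only [Set.mem_preimage, Set.mem_Iio] at hi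
    linarith
  · linarith [(abs_le.1 (hv i)).2]

lemma limsup_birkhoffAverage_apply (hC : ∀ x, |g x| ≤ C) (x : α) :
    limsup (birkhoffAverage ℝ f g · (f x)) atTop = limsup (birkhoffAverage ℝ f g · x) atTop :=
  limsup_eq_limsup_of_tendsto_sub (abs_birkhoffAverage_le hC · _) (abs_birkhoffAverage_le hC · _)
    (tendsto_birkhoffAverage_apply_sub_birkhoffAverage' ℝ
      (isBounded_iff_forall_norm_le.2 ⟨C, by rintro _ ⟨y, rfl⟩; exact hC y⟩) f x)

variable [MeasurableSpace α] {μ : Measure α}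

lemma measurable_birkhoffSum {β : Type*} [MeasurableSpace β] [AddCommMonoid β]
    [MeasurableAdd₂ β] {g : α → β} (hf : Measurable f) (hg : Measurable g) (n : ℕ) :
    Measurable (birkhoffSum f g n) :=
  Finset.measurable_sum _ fun k _ => hg.comp (hf.iterate k)

lemma measurableSet_setOf_forall_birkhoffSum_nonpos (hf : Measurable f) (hh : Measurable h)
    (M : ℕ) : MeasurableSet {y | ∀ n ≤ M, birkhoffSum f h n y ≤ 0} := by
  simp only [Set.ofPred_forall]
  exact .iInter fun n => .iInter fun _ =>
    measurableSet_le (measurable_birkhoffSum hf hh n) measurable_const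

lemma MeasureTheory.MeasurePreserving.integrable_birkhoffSum (hf : MeasurePreserving f μ μ)
    (hg : Integrable g μ) (n : ℕ) : Integrable (birkhoffSum f g n) μ :=
  integrable_finsetSum _ fun k _ => (hf.iterate k).integrable_comp_of_integrable hg

lemma MeasureTheory.MeasurePreserving.integral_birkhoffSum (hf : MeasurePreserving f μ μ)
    (hg : Integrable g μ) (n : ℕ) : ∫ x, birkhoffSum f g n x ∂μ = n * ∫ x, g x ∂μ := by
  have hk : ∀ k, ∫ x, g (f^[k] x) ∂μ = ∫ x, g x ∂μ := fun k => by
    have hfk := hf.iterate k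
    rw [← integral_map hfk.measurable.aemeasurable (by rw [hfk.map_eq]; exact hg.1),
      hfk.map_eq]
  simp only [birkhoffSum]
  rw [integral_finsetSum (f := fun k x => g (f^[k] x)) _
    fun k _ => (hf.iterate k).integrable_comp_of_integrable hg]
  simp [hk]

lemma neg_mul_measureReal_le_integral [IsProbabilityMeasure μ] (hf : MeasurePreserving f μ μ)
    (hh : Measurable h) (hK : ∀ x, |h x| ≤ K) (M : ℕ) :
    -(K * μ.real {y | ∀ n ≤ M, birkhoffSum f h n y ≤ 0}) ≤ ∫ x, h x ∂μ := by
  set E := {y | ∀ n ≤ M, birkhoffSum f h n y ≤ 0}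
  have hE : MeasurableSet E := measurableSet_setOf_forall_birkhoffSum_nonpos hf.measurable hh M
  have hhi : Integrable h μ := .of_bound hh.aestronglyMeasurable K
    (.of_forall fun x => (Real.norm_eq_abs _).trans_le (hK x))
  have hEi : Integrable (E.indicator 1) μ := (integrable_const (1 : ℝ)).indicator hE
  have hbound : ∀ N : ℕ, -(K * M) ≤ N * ∫ x, h x ∂μ + K * (N * μ.real E) := fun N => by
    have hSh := hf.integrable_birkhoffSum hhi N
    have hSE := (hf.integrable_birkhoffSum hEi N).const_mul K
    have := integral_mono (integrable_const (-(K * M))) (hSh.add hSE) fun x => by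
      simp only [Pi.add_apply]
      linarith [neg_le_birkhoffSum_of_abs_le (f := f) hK M N x]
    simpa [integral_add hSh hSE, integral_const_mul, hf.integral_birkhoffSum hhi,
      hf.integral_birkhoffSum hEi, integral_indicator_one hE] using this
  have := (tendsto_const_div_atTop_nhds_zero_nat (K * M)).const_sub (-(K * μ.real E))
  refine le_of_tendsto (by rwa [sub_zero] at this) ?_
  filter_upwards [eventually_gt_atTop 0] with N hN
  have hN : (0 : ℝ) < N := by exact_mod_cast hN
  rw [sub_le_iff_le_add, ← sub_le_iff_le_add', le_div_iff₀ hN]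
  linarith [hbound N]

lemma integral_nonneg_of_ae_exists_birkhoffSum_pos [IsProbabilityMeasure μ]
    (hf : MeasurePreserving f μ μ) (hh : Measurable h) (hK : ∀ x, |h x| ≤ K)
    (hpos : ∀ᵐ x ∂μ, ∃ n, 0 < birkhoffSum f h n x) : 0 ≤ ∫ x, h x ∂μ := by
  set E : ℕ → Set α := fun M => {y | ∀ n ≤ M, birkhoffSum f h n y ≤ 0}
  have hE : ∀ M, MeasurableSet (E M) :=
    measurableSet_setOf_forall_birkhoffSum_nonpos hf.measurable hh
  have hnull : μ (⋂ M, E M) = 0 := by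
    refine measure_eq_zero_iff_ae_notMem.2 (hpos.mono fun x ⟨n, hn⟩ hx => ?_)
    exact (Set.mem_iInter.1 hx n n le_rfl).not_gt hn
  have htend : Tendsto (fun M => μ.real (E M)) atTop (𝓝 0) := by
    have := tendsto_measure_iInter_atTop (fun M => (hE M).nullMeasurableSet)
      (fun a b hab y hy n hn => hy n (hn.trans hab)) ⟨0, measure_ne_top μ _⟩
    rw [hnull] at this
    exact (ENNReal.tendsto_toReal ENNReal.zero_ne_top).comp this
  simpa using le_of_tendsto' (htend.const_mul K).neg
    (neg_mul_measureReal_le_integral hf hh hK)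

lemma Ergodic.ae_limsup_birkhoffAverage_le [IsProbabilityMeasure μ] (he : Ergodic f μ)
    (hg : Measurable g) (hC : ∀ x, |g x| ≤ C) :
    ∀ᵐ x ∂μ, limsup (birkhoffAverage ℝ f g · x) atTop ≤ ∫ y, g y ∂μ := by
  have hmeas : Measurable fun x => limsup (birkhoffAverage ℝ f g · x) atTop :=
    .limsup fun n => (measurable_birkhoffSum he.measurable hg n).const_smul ((n : ℝ)⁻¹)
  obtain ⟨c, hc⟩ := he.toPreErgodic.ae_eq_const_of_ae_eq_comp hmeas
    (funext (limsup_birkhoffAverage_apply hC))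
  suffices c ≤ ∫ y, g y ∂μ from hc.mono fun x hx => hx.trans_le this
  refine le_of_forall_lt_imp_le_of_dense fun s hs => ?_
  have hpos : ∀ᵐ x ∂μ, ∃ n, 0 < birkhoffSum f (fun y => g y - s) n x := by
    filter_upwards [hc] with x hx
    have hfreq := frequently_lt_of_lt_limsup
      (isBoundedUnder_of ⟨-C, fun n => (abs_le.1 (abs_birkhoffAverage_le (f := f) hC n x)).1⟩
        ).isCoboundedUnder_le (hs.trans_eq hx.symm)
    obtain ⟨n, hsn, hn⟩ := (hfreq.and_eventually (eventually_gt_atTop 0)).exists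
    refine ⟨n, ?_⟩
    rw [birkhoffAverage, smul_eq_mul, ← div_eq_inv_mul, lt_div_iff₀ (by exact_mod_cast hn)] at hsn
    simpa [birkhoffSum, Finset.sum_sub_distrib, mul_comm] using hsn
  have := integral_nonneg_of_ae_exists_birkhoffSum_pos (h := fun y => g y - s) (K := C + |s|)
    he.toMeasurePreserving (hg.sub measurable_const)
    (fun x => (abs_sub _ _).trans (by simpa using hC x)) hpos
  rw [integral_sub (.of_bound hg.aestronglyMeasurable C (.of_forall hC)) (integrable_const s)]
    at this
  simpa using this

theorem Ergodic.ae_tendsto_birkhoffAverage [IsProbabilityMeasure μ] (he : Ergodic f μ)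
    (hg : Measurable g) (hC : ∀ x, |g x| ≤ C) :
    ∀ᵐ x ∂μ, Tendsto (birkhoffAverage ℝ f g · x) atTop (𝓝 (∫ y, g y ∂μ)) := by
  have hC' : ∀ x, |(-g) x| ≤ C := by simpa using hC
  filter_upwards [he.ae_limsup_birkhoffAverage_le hg hC,
    he.ae_limsup_birkhoffAverage_le hg.neg hC'] with x hup hlow
  refine tendsto_order.2 ⟨fun a ha => ?_, fun a ha => ?_⟩
  · have hlt : ∫ y, (-g) y ∂μ < -a := by
      simp only [Pi.neg_apply, integral_neg]
      linarith
    have := eventually_lt_of_limsup_lt (hlow.trans_lt hlt)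
      (isBoundedUnder_of ⟨C, fun n => (abs_le.1 (abs_birkhoffAverage_le (f := f) hC' n x)).2⟩)
    simpa [birkhoffAverage_neg] using this
  · exact eventually_lt_of_limsup_lt (hup.trans_lt ha)
      (isBoundedUnder_of ⟨C, fun n => (abs_le.1 (abs_birkhoffAverage_le (f := f) hC n x)).2⟩)

end BirkhoffAverage

section LogWindow

variable {α : Type*} {f : α → α} {g : α → ℝ}

lemma continuous_birkhoffAverage [TopologicalSpace α] (hf : Continuous f) (hg : Continuous g)
    (n : ℕ) : Continuous (birkhoffAverage ℝ f g n) :=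
  (continuous_finsetSum _ fun k _ => hg.comp (hf.iterate k)).const_smul ((n : ℝ)⁻¹)

def LogWindowNear (f : α → α) (g : α → ℝ) (I ε : ℝ) (N : ℕ) (x : α) : Prop :=
  ∀ n : ℕ, Real.log N < n → n < N → |birkhoffAverage ℝ f g n x - I| < ε

lemma isOpen_setOf_logWindowNear [TopologicalSpace α] (hf : Continuous f) (hg : Continuous g)
    (I ε : ℝ) (N : ℕ) : IsOpen {x | LogWindowNear f g I ε N x} := by
  have : {x | LogWindowNear f g I ε N x} =
      ⋂ n ∈ Finset.range N, {x | Real.log N < n → |birkhoffAverage ℝ f g n x - I| < ε} := by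
    ext x
    simp only [LogWindowNear, Set.mem_ofPred_eq, Set.mem_iInter, Finset.mem_range]
    exact forall_congr' fun n => forall_comm
  rw [this]
  refine isOpen_biInter_finset fun n _ => ?_
  by_cases hn : Real.log N < n
  · have := continuous_birkhoffAverage hf hg n
    simpa only [hn, true_imp_iff] using isOpen_lt (by fun_prop) continuous_const
  · simp only [hn, false_imp_iff, Set.ofPred_true, isOpen_univ]

lemma eventually_logWindowNear_of_tendsto {I ε : ℝ} {x : α}
    (h : Tendsto (birkhoffAverage ℝ f g · x) atTop (𝓝 I)) (hε : 0 < ε) :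
    ∀ᶠ N in atTop, LogWindowNear f g I ε N x := by
  obtain ⟨n₀, hn₀⟩ := eventually_atTop.1 (h (Metric.ball_mem_nhds I hε))
  filter_upwards [(Real.tendsto_log_atTop.comp tendsto_natCast_atTop_atTop).eventually_ge_atTop
    (n₀ : ℝ)] with N hN n hn _
  exact hn₀ n (by exact_mod_cast hN.trans hn.le)

lemma tendsto_birkhoffAverage_iterate (hg : Bornology.IsBounded (Set.range g)) {I : ℝ} {x : α}
    (h : Tendsto (birkhoffAverage ℝ f g · x) atTop (𝓝 I)) (j : ℕ) :
    Tendsto (birkhoffAverage ℝ f g · (f^[j] x)) atTop (𝓝 I) := by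
  induction j with
  | zero => exact h
  | succ j ih =>
    rw [iterate_succ_apply']
    simpa using (tendsto_birkhoffAverage_apply_sub_birkhoffAverage' ℝ hg f (f^[j] x)).add ih

lemma residual_setOf_frequently_mem {X : Type*} [TopologicalSpace X] {U : ℕ → Set X}
    (hU : ∀ N, IsOpen (U N)) (hd : Dense {x | ∃ᶠ N in atTop, x ∈ U N}) :
    {x | ∃ᶠ N in atTop, x ∈ U N} ∈ residual X := by
  have : {x | ∃ᶠ N in atTop, x ∈ U N} = ⋂ q, ⋃ N ≥ q, U N := by
    ext x; simp [frequently_atTop]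
  rw [this] at hd ⊢
  exact countable_iInter_mem.2 fun q => residual_of_dense_open (isOpen_biUnion fun N _ => hU N)
    (hd.mono (Set.iInter_subset _ q))

lemma residual_setOf_frequently_logWindowNear [TopologicalSpace α] (hf : Continuous f)
    (hmin : ∀ x, Dense (Set.range fun n : ℕ => f^[n] x)) (hg : Continuous g)
    (hgb : Bornology.IsBounded (Set.range g)) {I ε : ℝ} {x₀ : α}
    (hx₀ : Tendsto (birkhoffAverage ℝ f g · x₀) atTop (𝓝 I)) (hε : 0 < ε) :
    {x | ∃ᶠ N in atTop, LogWindowNear f g I ε N x} ∈ residual α := by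
  refine residual_setOf_frequently_mem (isOpen_setOf_logWindowNear hf hg I ε) ?_
  refine (hmin x₀).mono (Set.range_subset_iff.2 fun j => ?_)
  exact (eventually_logWindowNear_of_tendsto (tendsto_birkhoffAverage_iterate hgb hx₀ j)
    hε).frequently

end LogWindow

lemma exists_strictMono_lt_log {P : ℕ → ℕ → Prop} (h : ∀ p, 1 ≤ p → ∃ᶠ N in atTop, P p N) :
    ∃ N : ℕ → ℕ, StrictMono N ∧ (∀ p, (N p : ℝ) < Real.log (N (p + 1))) ∧
      ∀ p, 1 ≤ p → P p (N p) := by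
  choose F hFq hFP using fun p q => frequently_atTop.1 (h (p + 1) p.succ_pos) q
  obtain ⟨N, hN⟩ : ∃ N : ℕ → ℕ, ∀ p, N (p + 1) = F p (⌈Real.exp (N p)⌉₊ + 1) :=
    ⟨fun p => Nat.rec 0 (fun p Np => F p (⌈Real.exp Np⌉₊ + 1)) p, fun _ => rfl⟩
  have hlog : ∀ p, (N p : ℝ) < Real.log (N (p + 1)) := fun p => by
    have hlt : ⌈Real.exp (N p)⌉₊ < N (p + 1) := hN p ▸ hFq _ _
    rw [Real.lt_log_iff_exp_lt (by exact_mod_cast (Nat.zero_le _).trans_lt hlt)]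
    exact (Nat.le_ceil _).trans_lt (by exact_mod_cast hlt)
  refine ⟨N, strictMono_nat_of_lt_succ fun p => ?_, hlog, ?_⟩
  · exact_mod_cast (hlog p).trans_le (Real.log_le_self (Nat.cast_nonneg _))
  · rintro (_ | p) hp
    · exact absurd hp (by decide)
    · exact hN p ▸ hFP p _

/-- residual set of points whose Birkhoff averages oscillate between
`∫ u dμ₀` and `∫ u dμ₁` on alternating scales. -/
theorem stmt15 [MetricSpace Ω] [CompactSpace Ω] [MeasurableSpace Ω] [BorelSpace Ω]
    (σ : Ω → Ω) (hσ : Continuous σ)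
    (hmin : ∀ ω : Ω, Dense (Set.range fun n : ℕ => σ^[n] ω))
    (u : Ω → ℝ) (hu : Continuous u)
    (μ₀ μ₁ : Measure Ω) (h₀ : IsProbabilityMeasure μ₀) (h₁ : IsProbabilityMeasure μ₁)
    (he₀ : Ergodic σ μ₀) (he₁ : Ergodic σ μ₁) :
    ∃ M ∈ residual Ω, ∀ ω ∈ M, ∃ N : ℕ → ℕ, StrictMono N ∧
      (∀ p : ℕ, 1 ≤ p → (N p : ℝ) < Real.log (N (p + 1))) ∧
      ∀ p : ℕ, 1 ≤ p → ∀ n : ℕ, Real.log (N p) < (n : ℝ) → n < N p →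
        |(1 / (n : ℝ)) * ∑ k ∈ Finset.range n, u (σ^[k] ω)
          - ∫ x, u x ∂(if p % 2 = 0 then μ₀ else μ₁)| < 1 / (p : ℝ) := by
  set μ : ℕ → Measure Ω := fun p => if p % 2 = 0 then μ₀ else μ₁
  have hμ : ∀ p, IsProbabilityMeasure (μ p) ∧ Ergodic σ (μ p) := fun p => by
    by_cases hp : p % 2 = 0 <;> simp only [μ, hp, if_true, if_false] <;> exact ⟨‹_›, ‹_›⟩
  have hub : Bornology.IsBounded (Set.range u) := (isCompact_range hu).isBounded
  obtain ⟨C, hC⟩ := isBounded_iff_forall_norm_le.1 hub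
  have hgeneric : ∀ p, ∃ x, Tendsto (birkhoffAverage ℝ σ u · x) atTop (𝓝 (∫ y, u y ∂μ p)) :=
    fun p => haveI := (hμ p).1
      ((hμ p).2.ae_tendsto_birkhoffAverage hu.measurable fun x => hC _ ⟨x, rfl⟩).exists
  choose x₀ hx₀ using hgeneric
  refine ⟨⋂ (p : ℕ) (_ : 1 ≤ p),
      {ω | ∃ᶠ N in atTop, LogWindowNear σ u (∫ y, u y ∂μ p) (1 / p) N ω},
    countable_iInter_mem.2 fun p => countable_iInter_mem.2 fun hp =>
      residual_setOf_frequently_logWindowNear hσ hmin hu hub (hx₀ p)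
        (one_div_pos.2 (Nat.cast_pos.2 hp)), fun ω hω => ?_⟩
  obtain ⟨N, hN, hlog, hwin⟩ := exists_strictMono_lt_log fun p hp => Set.mem_iInter₂.1 hω p hp
  refine ⟨N, hN, fun p _ => hlog p, fun p hp n h₁ h₂ => ?_⟩
  simpa [birkhoffAverage, birkhoffSum, one_div] using hwin p hp n h₁ h₂
end
end

section
/- Let Ω be compact metric, σ continuous, 0 < ε < 1, ω ∈ Ω, n ≥ 2. Let μ_{ε,ω} = Σ_{k≥0} ε(1-ε)^k δ_{σ^k(ω)} and A_{m,ω} = (1/m) Σ_{k=0}^{m-1} δ_{σ^k(ω)}. Then μ_{ε,ω} = Σ_{k=⌊ln n⌋}^{n-2} (k+1) ε² (1-ε)^k A_{k+1,ω} + R_{n,ε,ω}, where R_{n,ε,ω} = Σ_{k=0}^{⌊ln n⌋-1} (k+1) ε² (1-ε)^k A_{k+1,ω} + n ε (1-ε)^{n-1} A_{n,ω} + (1-ε)^n μ_{ε,σ^n(ω)}, and the total mass satisfies R_{n,ε,ω}(Ω) ≤ (ε ln n)² + (1 + ε n e) e^{-ε n} for all ω. -/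
open MeasureTheory Filter Topology
open scoped ENNReal

noncomputable section

variable {Ω : Type*}

section Aux
variable [MeasurableSpace Ω]

lemma smul_empMeas (σ : Ω → Ω) (m : ℕ) (ω : Ω) :
    ((m + 1 : ℕ) : ℝ≥0∞) • empMeas σ (m + 1) ω
      = ∑ j ∈ Finset.range (m + 1), Measure.dirac (σ^[j] ω) := by
  rw [empMeas, smul_smul, ENNReal.mul_inv_cancel (by exact_mod_cast Nat.succ_ne_zero m)
    (ENNReal.natCast_ne_top _), one_smul]

lemma empMeas_univ (σ : Ω → Ω) (m : ℕ) (ω : Ω) :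
    empMeas σ (m + 1) ω Set.univ = 1 := by
  simp [empMeas, ENNReal.inv_mul_cancel]

lemma discMeas_univ (σ : Ω → Ω) {ε : ℝ} (hε0 : 0 < ε) (hε1 : ε < 1) (x : Ω) :
    discMeas σ ε x Set.univ = 1 := by
  have h1 : (0:ℝ) ≤ 1 - ε := by linarith
  rw [discMeas, Measure.sum_apply _ MeasurableSet.univ]
  simp only [Measure.smul_apply, smul_eq_mul, measure_univ, mul_one]
  have : ∀ k : ℕ, ENNReal.ofReal (ε * (1 - ε) ^ k)
      = ENNReal.ofReal ε * (ENNReal.ofReal (1 - ε)) ^ k := by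
    intro k
    rw [ENNReal.ofReal_mul hε0.le, ENNReal.ofReal_pow h1]
  simp only [this]
  rw [ENNReal.tsum_mul_left, ENNReal.tsum_geometric]
  have h2 : (1 : ℝ≥0∞) - ENNReal.ofReal (1 - ε) = ENNReal.ofReal ε := by
    rw [← ENNReal.ofReal_one, ← ENNReal.ofReal_sub _ h1]
    norm_num
  rw [h2, ENNReal.mul_inv_cancel (by simp [hε0]) ENNReal.ofReal_ne_top]

lemma discMeas_succ (σ : Ω → Ω) {ε : ℝ} (hε1 : ε ≤ 1) (x : Ω) :
    discMeas σ ε x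
      = ENNReal.ofReal ε • Measure.dirac x
        + ENNReal.ofReal (1 - ε) • discMeas σ ε (σ x) := by
  have h1 : (0:ℝ) ≤ 1 - ε := by linarith
  ext s hs
  rw [discMeas, Measure.sum_apply _ hs, tsum_eq_zero_add' ENNReal.summable]
  simp only [Measure.smul_apply, smul_eq_mul, Measure.add_apply, Function.iterate_succ_apply,
    Function.iterate_zero_apply, pow_zero, mul_one, pow_succ]
  rw [discMeas, Measure.sum_apply _ hs]
  congr 1
  rw [← ENNReal.tsum_mul_left]
  refine tsum_congr fun k => ?_
  rw [Measure.smul_apply, smul_eq_mul, ← mul_assoc, ← mul_assoc, ← ENNReal.ofReal_mul h1]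
  ring_nf

end Aux

section Key
variable [MeasurableSpace Ω]

lemma key (σ : Ω → Ω) {ε : ℝ} (hε0 : 0 ≤ ε) (hε1 : ε ≤ 1) (ω : Ω) (m : ℕ) :
    discMeas σ ε ω
      = (∑ k ∈ Finset.range m,
          ENNReal.ofReal ((k + 1 : ℝ) * ε ^ 2 * (1 - ε) ^ k) • empMeas σ (k + 1) ω)
        + ENNReal.ofReal ((m + 1 : ℝ) * ε * (1 - ε) ^ m) • empMeas σ (m + 1) ω
        + ENNReal.ofReal ((1 - ε) ^ (m + 1)) • discMeas σ ε (σ^[m + 1] ω) := by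
  have h1 : (0:ℝ) ≤ 1 - ε := by linarith
  induction m with
  | zero =>
    have hA : empMeas σ 1 ω = Measure.dirac ω := by
      simp [empMeas]
    simp only [Finset.range_zero, Finset.sum_empty, zero_add, Nat.cast_zero, pow_zero, mul_one,
      zero_add, one_mul, pow_one, hA, Function.iterate_one]
    exact discMeas_succ σ hε1 ω
  | succ m ih =>
    have hstep : ENNReal.ofReal ((m + 1 : ℝ) * ε * (1 - ε) ^ m) • empMeas σ (m + 1) ω
          + ENNReal.ofReal ((1 - ε) ^ (m + 1)) • discMeas σ ε (σ^[m + 1] ω)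
        = ENNReal.ofReal ((m + 1 : ℝ) * ε ^ 2 * (1 - ε) ^ m) • empMeas σ (m + 1) ω
          + ENNReal.ofReal ((m + 1 + 1 : ℝ) * ε * (1 - ε) ^ (m + 1)) • empMeas σ (m + 1 + 1) ω
          + ENNReal.ofReal ((1 - ε) ^ (m + 1 + 1)) • discMeas σ ε (σ^[m + 1 + 1] ω) := by
      rw [Function.iterate_succ_apply' σ (m + 1) ω, discMeas_succ σ hε1 (σ^[m + 1] ω),
        smul_add, smul_smul, smul_smul, ← ENNReal.ofReal_mul (by positivity),
        ← ENNReal.ofReal_mul (by positivity)]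
      have e1 : (1 - ε) ^ (m + 1) * (1 - ε) = (1 - ε) ^ (m + 1 + 1) := by ring
      have e2 : ENNReal.ofReal ((m + 1 : ℝ) * ε * (1 - ε) ^ m)
          = ENNReal.ofReal ((m + 1 : ℝ) * ε ^ 2 * (1 - ε) ^ m)
            + ENNReal.ofReal ((m + 1 : ℝ) * (ε * (1 - ε) ^ (m + 1))) := by
        rw [← ENNReal.ofReal_add (by positivity) (by positivity)]
        congr 1
        ring
      rw [e1, e2, add_smul]
      have e3 : ENNReal.ofReal ((m + 1 : ℝ) * (ε * (1 - ε) ^ (m + 1)))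
          = ((m + 1 : ℕ) : ℝ≥0∞) * ENNReal.ofReal (ε * (1 - ε) ^ (m + 1)) := by
        rw [← ENNReal.ofReal_natCast (m + 1), ← ENNReal.ofReal_mul (by positivity)]
        congr 1
        push_cast; ring
      have e4 : ENNReal.ofReal ((m + 1 + 1 : ℝ) * ε * (1 - ε) ^ (m + 1))
          = ((m + 1 + 1 : ℕ) : ℝ≥0∞) * ENNReal.ofReal (ε * (1 - ε) ^ (m + 1)) := by
        rw [← ENNReal.ofReal_natCast (m + 1 + 1), ← ENNReal.ofReal_mul (by positivity)]
        congr 1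
        push_cast; ring
      have e5 : ENNReal.ofReal ((1 - ε) ^ (m + 1) * ε)
          = ENNReal.ofReal (ε * (1 - ε) ^ (m + 1)) := by rw [mul_comm]
      rw [e3, e4, e5, mul_smul, mul_smul,
        smul_comm ((m + 1 : ℕ) : ℝ≥0∞), smul_comm ((m + 1 + 1 : ℕ) : ℝ≥0∞)]
      rw [add_assoc, add_comm (ENNReal.ofReal ((m+1:ℝ) * ε^2 * (1-ε)^m) • empMeas σ (m+1) ω)]
      rw [← add_assoc, ← smul_add, smul_empMeas, smul_empMeas,
        Finset.sum_range_succ (fun j => Measure.dirac (σ^[j] ω)) (m + 1)]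
      abel
    rw [ih, Finset.sum_range_succ, add_assoc (∑ k ∈ Finset.range m,
      ENNReal.ofReal ((k + 1 : ℝ) * ε ^ 2 * (1 - ε) ^ k) • empMeas σ (k + 1) ω), hstep]
    push_cast
    abel

end Key

/-- decomposition of `μ_{ε,ω}` into empirical measures with a small
remainder. -/
theorem stmt16 [MetricSpace Ω] [CompactSpace Ω] [MeasurableSpace Ω] [BorelSpace Ω]
    (σ : Ω → Ω) (hσ : Continuous σ)
    (ε : ℝ) (hε0 : 0 < ε) (hε1 : ε < 1) (ω : Ω) (n : ℕ) (hn : 2 ≤ n) :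
    ∃ R : Measure Ω,
      R = (∑ k ∈ Finset.range ⌊Real.log n⌋₊,
            ENNReal.ofReal ((k + 1 : ℝ) * ε ^ 2 * (1 - ε) ^ k) • empMeas σ (k + 1) ω)
          + ENNReal.ofReal ((n : ℝ) * ε * (1 - ε) ^ (n - 1)) • empMeas σ n ω
          + ENNReal.ofReal ((1 - ε) ^ n) • discMeas σ ε (σ^[n] ω) ∧
      discMeas σ ε ω
        = (∑ k ∈ Finset.Icc ⌊Real.log n⌋₊ (n - 2),
            ENNReal.ofReal ((k + 1 : ℝ) * ε ^ 2 * (1 - ε) ^ k) • empMeas σ (k + 1) ω) + R ∧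
      R Set.univ ≤ ENNReal.ofReal
        ((ε * Real.log n) ^ 2 + (1 + ε * n * Real.exp 1) * Real.exp (-(ε * n))) := by
  obtain ⟨N, rfl⟩ : ∃ N, n = N + 2 := ⟨n - 2, by omega⟩
  have h1ε : (0:ℝ) ≤ 1 - ε := by linarith
  set L := ⌊Real.log ((N + 2 : ℕ) : ℝ)⌋₊ with hLdef
  have hlog_nonneg : (0:ℝ) ≤ Real.log ((N + 2 : ℕ) : ℝ) :=
    Real.log_nonneg (by push_cast; linarith [Nat.cast_nonneg (α := ℝ) N])
  have hLle : (L : ℝ) ≤ Real.log ((N + 2 : ℕ) : ℝ) := Nat.floor_le hlog_nonneg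
  have hLN : L ≤ N + 1 := by
    have h2 : Real.log ((N + 2 : ℕ) : ℝ) ≤ ((N + 1 : ℕ) : ℝ) := by
      have := Real.log_le_sub_one_of_pos (x := ((N + 2 : ℕ) : ℝ)) (by positivity)
      push_cast at this ⊢; linarith
    calc L ≤ ⌊((N + 1 : ℕ) : ℝ)⌋₊ := Nat.floor_le_floor h2
      _ = N + 1 := Nat.floor_natCast _
  refine ⟨_, rfl, ?_, ?_⟩
  · -- decomposition
    have hkey := key σ hε0.le hε1.le ω (N + 1)
    have hsplit : (∑ k ∈ Finset.range (N + 1),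
          ENNReal.ofReal ((k + 1 : ℝ) * ε ^ 2 * (1 - ε) ^ k) • empMeas σ (k + 1) ω)
        = (∑ k ∈ Finset.range L,
            ENNReal.ofReal ((k + 1 : ℝ) * ε ^ 2 * (1 - ε) ^ k) • empMeas σ (k + 1) ω)
          + ∑ k ∈ Finset.Icc L N,
            ENNReal.ofReal ((k + 1 : ℝ) * ε ^ 2 * (1 - ε) ^ k) • empMeas σ (k + 1) ω := by
      rw [Finset.range_eq_Ico, ← Finset.Ico_add_one_right_eq_Icc,
        ← Finset.sum_Ico_consecutive _ (Nat.zero_le L) hLN, ← Finset.range_eq_Ico]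
    have hc : ((N + 1 : ℕ) : ℝ) + 1 = ((N + 2 : ℕ) : ℝ) := by push_cast; ring
    rw [hc] at hkey
    simp only [show N + 1 + 1 = N + 2 from rfl] at hkey
    rw [hkey, hsplit]
    simp only [show N + 2 - 2 = N from rfl, show N + 2 - 1 = N + 1 from rfl]
    abel
  · -- mass bound
    rw [Measure.add_apply, Measure.add_apply, Measure.smul_apply, Measure.smul_apply,
      smul_eq_mul, smul_eq_mul]
    have hemp : empMeas σ (N + 2) ω Set.univ = 1 := empMeas_univ σ (N + 1) ω
    have hdisc : discMeas σ ε (σ^[N + 2] ω) Set.univ = 1 := discMeas_univ σ hε0 hε1 _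
    rw [hemp, hdisc, mul_one, mul_one]
    have hsum : (∑ k ∈ Finset.range L,
          ENNReal.ofReal ((k + 1 : ℝ) * ε ^ 2 * (1 - ε) ^ k) • empMeas σ (k + 1) ω) Set.univ
        = ENNReal.ofReal (∑ k ∈ Finset.range L, ((k : ℝ) + 1) * ε ^ 2 * (1 - ε) ^ k) := by
      rw [Measure.finset_sum_apply, ENNReal.ofReal_sum_of_nonneg (fun k _ => by positivity)]
      refine Finset.sum_congr rfl fun k _ => ?_
      rw [Measure.smul_apply, smul_eq_mul, empMeas_univ, mul_one]
    rw [hsum, ← ENNReal.ofReal_add (by positivity) (by positivity),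
      ← ENNReal.ofReal_add (by positivity) (by positivity)]
    refine ENNReal.ofReal_le_ofReal ?_
    have hexp : 1 - ε ≤ Real.exp (-ε) := by
      have := Real.add_one_le_exp (-ε); linarith
    have hb1 : ∑ k ∈ Finset.range L, ((k : ℝ) + 1) * ε ^ 2 * (1 - ε) ^ k
        ≤ (ε * Real.log ((N + 2 : ℕ) : ℝ)) ^ 2 := by
      have hterm : ∀ k ∈ Finset.range L, ((k : ℝ) + 1) * ε ^ 2 * (1 - ε) ^ k ≤ (L : ℝ) * ε ^ 2 := by
        intro k hk
        have hkL : (k : ℝ) + 1 ≤ (L : ℝ) := by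
          exact_mod_cast Nat.succ_le_of_lt (Finset.mem_range.mp hk)
        have hpow : (1 - ε) ^ k ≤ 1 := pow_le_one₀ h1ε (by linarith)
        have hpow0 : (0:ℝ) ≤ (1 - ε) ^ k := pow_nonneg h1ε k
        have h := mul_le_mul_of_nonneg_left hpow (by positivity : (0:ℝ) ≤ (k:ℝ) + 1)
        calc ((k:ℝ) + 1) * ε ^ 2 * (1 - ε) ^ k = (((k:ℝ) + 1) * (1 - ε) ^ k) * ε ^ 2 := by ring
          _ ≤ (L:ℝ) * ε ^ 2 := mul_le_mul_of_nonneg_right (by linarith) (sq_nonneg ε)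
      calc ∑ k ∈ Finset.range L, ((k : ℝ) + 1) * ε ^ 2 * (1 - ε) ^ k
          ≤ ∑ _k ∈ Finset.range L, (L : ℝ) * ε ^ 2 := Finset.sum_le_sum hterm
        _ = (L : ℝ) * ((L : ℝ) * ε ^ 2) := by
            rw [Finset.sum_const, Finset.card_range]; push_cast; ring
        _ ≤ (ε * Real.log ((N + 2 : ℕ) : ℝ)) ^ 2 := by
            have h := mul_le_mul hLle hLle (Nat.cast_nonneg L) hlog_nonneg
            calc (L:ℝ) * ((L:ℝ) * ε ^ 2) = ((L:ℝ) * (L:ℝ)) * ε ^ 2 := by ring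
              _ ≤ (Real.log ((N + 2 : ℕ) : ℝ) * Real.log ((N + 2 : ℕ) : ℝ)) * ε ^ 2 :=
                  mul_le_mul_of_nonneg_right h (sq_nonneg ε)
              _ = (ε * Real.log ((N + 2 : ℕ) : ℝ)) ^ 2 := by ring
    have hb2 : ((N + 2 : ℕ) : ℝ) * ε * (1 - ε) ^ (N + 1)
        ≤ ε * ((N + 2 : ℕ) : ℝ) * Real.exp 1 * Real.exp (-(ε * ((N + 2 : ℕ) : ℝ))) := by
      have hp : (1 - ε) ^ (N + 1) ≤ Real.exp 1 * Real.exp (-(ε * ((N + 2 : ℕ) : ℝ))) := by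
        calc (1 - ε) ^ (N + 1) ≤ (Real.exp (-ε)) ^ (N + 1) := pow_le_pow_left₀ h1ε hexp _
          _ = Real.exp (((N + 1 : ℕ) : ℝ) * (-ε)) := (Real.exp_nat_mul _ _).symm
          _ ≤ Real.exp (1 + -(ε * ((N + 2 : ℕ) : ℝ))) := by
              refine Real.exp_le_exp.mpr ?_
              push_cast; nlinarith
          _ = Real.exp 1 * Real.exp (-(ε * ((N + 2 : ℕ) : ℝ))) := Real.exp_add _ _
      have hN2 : (0:ℝ) ≤ ((N + 2 : ℕ) : ℝ) * ε := by positivity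
      nlinarith [pow_nonneg h1ε (N + 1)]
    have hb3 : (1 - ε) ^ (N + 2) ≤ Real.exp (-(ε * ((N + 2 : ℕ) : ℝ))) := by
      calc (1 - ε) ^ (N + 2) ≤ (Real.exp (-ε)) ^ (N + 2) := pow_le_pow_left₀ h1ε hexp _
        _ = Real.exp (((N + 2 : ℕ) : ℝ) * (-ε)) := (Real.exp_nat_mul _ _).symm
        _ = Real.exp (-(ε * ((N + 2 : ℕ) : ℝ))) := by ring_nf
    simp only [show N + 2 - 1 = N + 1 from rfl]
    nlinarith [hb1, hb2, hb3]
end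
end
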